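/- arXiv:2301.02908 — 3 statements merged into one kernel-verified Lean document; each statement's English description precedes it below -/
import Mathlib

section
/- Let $K$ be a discrete hypergroup with identity $e$ and involution $x\mapsto x^-$, and let $\mu$ be the left Haar measure given by $\mu(\{x\})=1/(\delta_x*\delta_{x^-})(\{e\})$. Then $\mu(\{x\})\geq 1$ for every $x\in K$, and consequently for each $p\geq 1$ and $g\in L^p(K,\mu)$ the set $\{f\in L^p(K,\mu): |f|\geq|g|\}$ is not $\sigma$-porous in $L^p(K,\mu)$. -/
open MeasureTheory Metric Set ENNReal

/-- `E` is `lam`-porous at `x`: for every `δ > 0` there is `y ∈ B(x;δ) \ {x}` with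
`B(y; lam * d(x,y)) ∩ E = ∅`. -/
def PorousAt {X : Type*} [PseudoMetricSpace X] (lam : ℝ) (E : Set X) (x : X) : Prop :=
  ∀ δ > 0, ∃ y ∈ Metric.ball x δ, y ≠ x ∧ Metric.ball y (lam * dist x y) ∩ E = ∅

/-- `E` is `lam`-porous if it is `lam`-porous at each of its points. -/
def Porous {X : Type*} [PseudoMetricSpace X] (lam : ℝ) (E : Set X) : Prop :=
  ∀ x ∈ E, PorousAt lam E x

/-- `E` is `σ`-`lam`-porous if it is a countable union of `lam`-porous sets. -/
def SigmaPorousFor {X : Type*} [PseudoMetricSpace X] (lam : ℝ) (E : Set X) : Prop :=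
  ∃ S : ℕ → Set X, (∀ n, Porous lam (S n)) ∧ E = ⋃ n, S n

/-- `E` is `σ`-porous if it is a countable union of sets, each `lam`-porous for
some `0 < lam < 1`. -/
def SigmaPorous {X : Type*} [PseudoMetricSpace X] (E : Set X) : Prop :=
  ∃ S : ℕ → Set X, (∀ n, ∃ lam : ℝ, 0 < lam ∧ lam < 1 ∧ Porous lam (S n)) ∧ E = ⋃ n, S n

/-- A discrete hypergroup: a convolution of point masses giving probability measures, an
involution, and an identity, with `e ∈ supp(δ_x * δ_y)` iff `y = x⁻`. -/
structure DiscreteHypergroup (K : Type*) [MeasurableSpace K] where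
  conv : K → K → Measure K
  inv : K → K
  e : K
  prob : ∀ x y, IsProbabilityMeasure (conv x y)
  inv_involutive : Function.Involutive inv
  ident_left : ∀ x, conv e x = Measure.dirac x
  ident_right : ∀ x, conv x e = Measure.dirac x
  e_mem_iff : ∀ x y, 0 < conv x y {e} ↔ y = inv x

namespace Stmt10Aux

noncomputable def boost (c : ℝ) (v : ℂ) : ℂ :=
  if c ≤ ‖v‖ then v else if v = 0 then (c : ℂ) else (c / ‖v‖ : ℝ) • v

lemma boost_norm_ge {c : ℝ} (hc : 0 ≤ c) (v : ℂ) : c ≤ ‖boost c v‖ := by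
  unfold boost
  split_ifs with h1 h2
  · exact h1
  · subst h2; simpa using le_abs_self c
  · push_neg at h1
    have hv : 0 < ‖v‖ := norm_pos_iff.mpr h2
    rw [norm_smul, Real.norm_eq_abs, abs_of_nonneg (by positivity)]
    rw [div_mul_cancel₀ _ (ne_of_gt hv)]

lemma boost_dist (c : ℝ) (v : ℂ) : ‖boost c v - v‖ ≤ max (c - ‖v‖) 0 := by
  unfold boost
  split_ifs with h1 h2
  · simp
  · push_neg at h1
    subst h2
    simp only [norm_zero, sub_zero] at h1 ⊢
    rw [Complex.norm_real, Real.norm_eq_abs, abs_of_nonneg h1.le]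
    exact le_max_of_le_left (by simp)
  · push_neg at h1
    have hv : 0 < ‖v‖ := norm_pos_iff.mpr h2
    have h3 : (c / ‖v‖ : ℝ) • v - v = ((c / ‖v‖ - 1 : ℝ)) • v := by
      rw [sub_smul, one_smul]
    rw [h3, norm_smul, Real.norm_eq_abs]
    have h4 : (0:ℝ) ≤ c / ‖v‖ - 1 := by
      rw [sub_nonneg, le_div_iff₀ hv, one_mul]; exact h1.le
    rw [abs_of_nonneg h4, sub_mul, one_mul, div_mul_cancel₀ _ (ne_of_gt hv)]
    exact le_max_left _ _

lemma boost_measurable {K : Type*} [MeasurableSpace K] {c : K → ℝ} {f : K → ℂ}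
    (hc : Measurable c) (hf : Measurable f) :
    Measurable fun t => boost (c t) (f t) := by
  unfold boost
  apply Measurable.ite (measurableSet_le hc hf.norm)
  · exact hf
  · apply Measurable.ite (hf (MeasurableSet.singleton 0))
    · exact Complex.measurable_ofReal.comp hc
    · exact ((hc.div hf.norm)).smul hf

end Stmt10Aux

namespace Stmt10Aux

variable {K : Type*} [MeasurableSpace K] [MeasurableSingletonClass K]
  {μ : MeasureTheory.Measure K} {p : ℝ≥0∞} [Fact (1 ≤ p)]

noncomputable def Ee (μ : MeasureTheory.Measure K) (p : ℝ≥0∞) (f : K → ℂ) : ℝ≥0∞ :=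
  ∫⁻ t, (‖f t‖₊ : ℝ≥0∞) ^ p.toReal ∂μ

section Facts

lemma one_le_pr (hp : p ≠ ⊤) : 1 ≤ p.toReal := by
  have h1 : (1 : ℝ≥0∞) ≤ p := Fact.out
  have := ENNReal.toReal_mono hp h1
  simpa using this

lemma pr_pos (hp : p ≠ ⊤) : 0 < p.toReal := lt_of_lt_of_le one_pos (one_le_pr hp)

lemma p_ne_zero : p ≠ 0 := by
  have h1 : (1 : ℝ≥0∞) ≤ p := Fact.out
  exact fun h => by simp [h] at h1

lemma null_empty (hμ1 : ∀ t : K, 1 ≤ μ {t}) {s : Set K} (h : μ s = 0) : s = ∅ := by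
  by_contra hs
  obtain ⟨t, ht⟩ := Set.nonempty_iff_ne_empty.mpr hs
  have : (1 : ℝ≥0∞) ≤ μ s := le_trans (hμ1 t) (measure_mono (Set.singleton_subset_iff.mpr ht))
  rw [h] at this
  simp at this

variable (hμ1 : ∀ t : K, 1 ≤ μ {t}) (hp : p ≠ ⊤)
include hμ1 hp

lemma ae_all {P : K → Prop} (h : ∀ᵐ t ∂μ, P t) : ∀ t, P t := by
  intro t
  rw [MeasureTheory.ae_iff] at h
  by_contra ht
  have := null_empty hμ1 h
  exact absurd (Set.eq_empty_iff_forall_notMem.mp this t) (by simpa using ht)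

lemma ae_eq_eq {α : Type*} {f g : K → α} (h : f =ᵐ[μ] g) : f = g :=
  funext (ae_all hμ1 hp h)

lemma eLp_eq (f : K → ℂ) : eLpNorm f p μ = (Ee μ p f) ^ (1 / p.toReal) := by
  rw [eLpNorm_eq_lintegral_rpow_enorm_toReal (p_ne_zero (p := p)) hp]; rfl

lemma Ee_eq_eLp (f : K → ℂ) : Ee μ p f = (eLpNorm f p μ) ^ p.toReal := by
  rw [eLp_eq hμ1 hp, ← ENNReal.rpow_mul, one_div, inv_mul_cancel₀ (ne_of_gt (pr_pos hp)), rpow_one]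

lemma Ee_coe_lt_top (f : Lp ℂ p μ) : Ee μ p ⇑f < ⊤ := by
  rw [Ee_eq_eLp hμ1 hp]
  exact ENNReal.rpow_lt_top_of_nonneg (le_of_lt (pr_pos hp)) (Lp.eLpNorm_ne_top f)

lemma coe_sub_eq (f h : Lp ℂ p μ) : ⇑(f - h) = ⇑f - ⇑h :=
  ae_eq_eq hμ1 hp (Lp.coeFn_sub f h)

lemma dist_eq' (f h : Lp ℂ p μ) :
    ENNReal.ofReal (dist f h) = (Ee μ p (⇑f - ⇑h)) ^ (1 / p.toReal) := by
  rw [Lp.dist_def, ENNReal.ofReal_toReal, eLp_eq hμ1 hp]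
  rw [← coe_sub_eq hμ1 hp f h]
  exact Lp.eLpNorm_ne_top (f - h)

lemma Ee_dist (f h : Lp ℂ p μ) :
    Ee μ p (⇑f - ⇑h) = (ENNReal.ofReal (dist f h)) ^ p.toReal := by
  rw [dist_eq' hμ1 hp, ← ENNReal.rpow_mul, one_div,
    inv_mul_cancel₀ (ne_of_gt (pr_pos hp)), rpow_one]

lemma dist_le_of_Ee {f h : Lp ℂ p μ} {D : ℝ} (hD : 0 ≤ D)
    (hle : Ee μ p (⇑f - ⇑h) ≤ (ENNReal.ofReal D) ^ p.toReal) : dist f h ≤ D := by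
  have h2 : ENNReal.ofReal (dist f h) ≤ ENNReal.ofReal D := by
    have := ENNReal.rpow_le_rpow hle (le_of_lt (one_div_pos.mpr (pr_pos hp)))
    rw [← dist_eq' hμ1 hp] at this
    rwa [← ENNReal.rpow_mul, one_div, mul_inv_cancel₀ (ne_of_gt (pr_pos hp)), rpow_one] at this
  rwa [ENNReal.ofReal_le_ofReal_iff hD] at h2

lemma val_le_Ee (w : K → ℂ) (t : K) :
    (‖w t‖₊ : ℝ≥0∞) ^ p.toReal ≤ Ee μ p w := by
  have h1 : (‖w t‖₊ : ℝ≥0∞) ^ p.toReal * μ {t} ≤ Ee μ p w := by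
    rw [← MeasureTheory.lintegral_singleton (fun s => (‖w s‖₊ : ℝ≥0∞) ^ p.toReal) t]
    exact MeasureTheory.lintegral_mono' Measure.restrict_le_self le_rfl
  calc (‖w t‖₊ : ℝ≥0∞) ^ p.toReal = (‖w t‖₊ : ℝ≥0∞) ^ p.toReal * 1 := (mul_one _).symm
  _ ≤ (‖w t‖₊ : ℝ≥0∞) ^ p.toReal * μ {t} := by
      exact mul_le_mul_right (hμ1 t) _
  _ ≤ Ee μ p w := h1

lemma ptwise_dist (f h : Lp ℂ p μ) (t : K) : ‖f t - h t‖ ≤ dist f h := by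
  have h1 := val_le_Ee hμ1 hp (⇑f - ⇑h) t
  rw [Ee_dist hμ1 hp] at h1
  have h2 : (‖(⇑f - ⇑h) t‖₊ : ℝ≥0∞) ≤ ENNReal.ofReal (dist f h) :=
    (ENNReal.rpow_le_rpow_iff (pr_pos hp)).mp h1
  rw [← enorm_eq_nnnorm, ← ofReal_norm] at h2
  have h3 := (ENNReal.ofReal_le_ofReal_iff dist_nonneg).mp h2
  simpa using h3

lemma coe_sm (u : Lp ℂ p μ) : StronglyMeasurable ⇑u := by
  obtain ⟨v, hv, heq⟩ := Lp.aestronglyMeasurable u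
  rw [ae_eq_eq hμ1 hp heq]
  exact hv

lemma exists_Lp (w : K → ℂ) (hw : Measurable w) (u : Lp ℂ p μ)
    (hdom : Ee μ p (w - ⇑u) < ⊤) : ∃ z : Lp ℂ p μ, ⇑z = w := by
  have hfin : Ee μ p w < ⊤ := by
    have hsm : AEStronglyMeasurable (w - ⇑u) μ :=
      (hw.stronglyMeasurable.sub (coe_sm hμ1 hp u)).aestronglyMeasurable
    have htri : eLpNorm w p μ ≤ eLpNorm (w - ⇑u) p μ + eLpNorm ⇑u p μ := by
      have hw2 : w = (w - ⇑u) + ⇑u := by funext t; simp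
      calc eLpNorm w p μ = eLpNorm ((w - ⇑u) + ⇑u) p μ := by rw [← hw2]
      _ ≤ _ := eLpNorm_add_le hsm (Lp.aestronglyMeasurable u) Fact.out
    have h1 : eLpNorm (w - ⇑u) p μ < ⊤ := by
      rw [eLp_eq hμ1 hp]
      exact ENNReal.rpow_lt_top_of_nonneg (by positivity) (ne_of_lt hdom)
    have h2 : eLpNorm w p μ < ⊤ :=
      lt_of_le_of_lt htri (ENNReal.add_lt_top.mpr ⟨h1, Lp.eLpNorm_lt_top u⟩)
    rw [Ee_eq_eLp hμ1 hp]
    exact ENNReal.rpow_lt_top_of_nonneg (le_of_lt (pr_pos hp)) (ne_of_lt h2)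
  have hmem : MemLp w p μ := by
    constructor
    · exact hw.stronglyMeasurable.aestronglyMeasurable
    · rw [eLp_eq hμ1 hp]
      exact ENNReal.rpow_lt_top_of_nonneg (by positivity) (ne_of_lt hfin)
  exact ⟨hmem.toLp w, ae_eq_eq hμ1 hp (hmem.coeFn_toLp)⟩

lemma Ee_mono {w u : K → ℂ} (h : ∀ t, ‖w t‖ ≤ ‖u t‖) : Ee μ p w ≤ Ee μ p u := by
  apply MeasureTheory.lintegral_mono
  intro t
  exact ENNReal.rpow_le_rpow (ENNReal.coe_le_coe.mpr (NNReal.coe_le_coe.mp (by simpa using h t)))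
    (le_of_lt (pr_pos hp))

lemma deepen (G : K → ℝ) (hGm : Measurable G) (hG0 : ∀ t, 0 ≤ G t)
    (hGfin : ∫⁻ t, (ENNReal.ofReal (G t)) ^ p.toReal ∂μ < ⊤)
    (x : Lp ℂ p μ) (hx : ∀ t, G t ≤ ‖x t‖) (ε : ℝ) (hε : 0 < ε) (Kr : ℝ) (hK : 1 ≤ Kr) :
    ∃ δ : ℝ, 0 < δ ∧ ∃ x' : Lp ℂ p μ, dist x x' ≤ ε ∧
      ∀ t, min (G t + δ) (Kr * G t) ≤ ‖x' t‖ := by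
  have hpr := pr_pos (p := p) hp
  set pr := p.toReal with hprdef
  have hKpos : (0:ℝ) < Kr := lt_of_lt_of_le one_pos hK
  set d : K → ℝ≥0∞ := fun t => (ENNReal.ofReal (G t)) ^ pr with hd
  have hdm : Measurable d := ENNReal.continuous_rpow_const.measurable.comp hGm.ennreal_ofReal
  set ν := μ.withDensity d with hν
  haveI : MeasureTheory.IsFiniteMeasure ν := by
    apply MeasureTheory.isFiniteMeasure_withDensity (ne_of_lt hGfin)
  set τ : ℝ≥0∞ := (ENNReal.ofReal ε) ^ pr / 2 with hτ
  have hτ0 : τ ≠ 0 := by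
    apply ne_of_gt
    apply ENNReal.div_pos _ (by norm_num)
    exact ne_of_gt (ENNReal.rpow_pos (by simpa using hε) ENNReal.ofReal_ne_top)
  have hτtop : τ ≠ ⊤ := by
    apply ne_of_lt
    apply lt_of_le_of_lt ENNReal.half_le_self
    exact ENNReal.rpow_lt_top_of_nonneg (le_of_lt hpr) ENNReal.ofReal_ne_top
  set Krp : ℝ≥0∞ := (ENNReal.ofReal Kr) ^ pr with hKrp
  have hKrp0 : Krp ≠ 0 :=
    ne_of_gt (ENNReal.rpow_pos (by simpa using hKpos) ENNReal.ofReal_ne_top)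
  have hKrptop : Krp ≠ ⊤ :=
    ne_of_lt (ENNReal.rpow_lt_top_of_nonneg (le_of_lt hpr) ENNReal.ofReal_ne_top)
  -- the small sets
  set A : ℕ → Set K := fun n => {t | G t ≤ 1 / (n + 1)} with hA
  have hAm : ∀ n, MeasurableSet (A n) := fun n =>
    measurableSet_le hGm measurable_const
  have hAanti : Antitone A := by
    intro n m hnm t ht
    simp only [hA, Set.mem_setOf_eq] at ht ⊢
    refine le_trans ht ?_
    have h1 : ((n:ℝ) + 1) ≤ (m:ℝ) + 1 := by exact_mod_cast Nat.succ_le_succ hnm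
    have h2 : (0:ℝ) < (n:ℝ) + 1 := by positivity
    exact one_div_le_one_div_of_le h2 h1
  have hAint : ν (⋂ n, A n) = 0 := by
    have hzero : ∀ t ∈ ⋂ n, A n, d t = 0 := by
      intro t ht
      simp only [Set.mem_iInter] at ht
      have hG0' : G t ≤ 0 := by
        by_contra hc
        push_neg at hc
        obtain ⟨n, hn⟩ := exists_nat_one_div_lt hc
        exact absurd (ht n) (by simp only [hA, Set.mem_setOf_eq]; push_cast; linarith)
      have : G t = 0 := le_antisymm hG0' (hG0 t)
      simp [hd, this, ENNReal.zero_rpow_of_pos hpr]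
    have hmeas : MeasurableSet (⋂ n, A n) := MeasurableSet.iInter hAm
    rw [hν, MeasureTheory.withDensity_apply _ hmeas]
    rw [MeasureTheory.setLIntegral_congr_fun hmeas (fun t ht => hzero t ht)]
    simp
  have htend : Filter.Tendsto (ν ∘ A) Filter.atTop (nhds 0) := by
    have := MeasureTheory.tendsto_measure_iInter_atTop (μ := ν)
      (fun n => (hAm n).nullMeasurableSet) hAanti ⟨0, ne_of_lt (measure_lt_top ν _)⟩
    rwa [hAint] at this
  have hτK : (0:ℝ≥0∞) < τ / Krp := ENNReal.div_pos hτ0 hKrptop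
  have hev : ∀ᶠ k in (Filter.atTop : Filter ℕ), (ν ∘ A) k < τ / Krp :=
    Filter.Tendsto.eventually_lt_const hτK htend
  obtain ⟨n, hn⟩ := hev.exists
  set η : ℝ := 1 / (n + 1) with hη
  have hηpos : 0 < η := by positivity
  -- B = complement
  have hμB : μ (A n)ᶜ < ⊤ := by
    have h1 : (ENNReal.ofReal η) ^ pr * μ (A n)ᶜ ≤ ν (A n)ᶜ := by
      rw [hν, MeasureTheory.withDensity_apply _ (hAm n).compl]
      rw [← MeasureTheory.setLIntegral_const]
      apply MeasureTheory.setLIntegral_mono hdm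
      intro t ht
      simp only [hA, Set.mem_compl_iff, Set.mem_setOf_eq, not_le] at ht
      exact ENNReal.rpow_le_rpow (ENNReal.ofReal_le_ofReal (le_of_lt ht)) (le_of_lt hpr)
    by_contra hc
    push_neg at hc
    have hc' : μ (A n)ᶜ = ⊤ := top_le_iff.mp hc
    rw [hc', ENNReal.mul_top
      (ne_of_gt (ENNReal.rpow_pos (by simpa using hηpos) ENNReal.ofReal_ne_top))] at h1
    exact absurd (lt_of_le_of_lt h1 (measure_lt_top ν _)) (lt_irrefl ⊤)
  -- choose δ
  set c : ℝ≥0∞ := (τ / (μ (A n)ᶜ + 1)) ^ (1 / pr) with hc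
  have hbase0 : τ / (μ (A n)ᶜ + 1) ≠ 0 :=
    ne_of_gt (ENNReal.div_pos hτ0 (by simp [ne_of_lt hμB]))
  have hbasetop : τ / (μ (A n)ᶜ + 1) ≠ ⊤ := by
    apply ne_of_lt (ENNReal.div_lt_top hτtop (by simp))
  have hc0 : c ≠ 0 := ne_of_gt (ENNReal.rpow_pos (pos_iff_ne_zero.mpr hbase0) hbasetop)
  have hctop : c ≠ ⊤ := ENNReal.rpow_ne_top_of_nonneg (by positivity) hbasetop
  set δ : ℝ := c.toReal with hδdef
  have hδpos : 0 < δ := ENNReal.toReal_pos hc0 hctop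
  have hofδ : ENNReal.ofReal δ = c := ENNReal.ofReal_toReal hctop
  have hδkey : (ENNReal.ofReal δ) ^ pr * μ (A n)ᶜ ≤ τ := by
    rw [hofδ, hc, ← ENNReal.rpow_mul, one_div,
      inv_mul_cancel₀ (ne_of_gt hpr), ENNReal.rpow_one]
    calc τ / (μ (A n)ᶜ + 1) * μ (A n)ᶜ ≤ τ / (μ (A n)ᶜ + 1) * (μ (A n)ᶜ + 1) :=
      mul_le_mul_right le_self_add _
    _ = τ := ENNReal.div_mul_cancel (by simp) (by simp [ne_of_lt hμB])
  -- the new function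
  have hxm : Measurable (⇑x) := (coe_sm hμ1 hp x).measurable
  set w : K → ℂ := fun t => if G t ≤ η then boost (Kr * G t) (x t)
    else boost (G t + δ) (x t) with hw
  have hwm : Measurable w := by
    apply Measurable.ite (measurableSet_le hGm measurable_const)
    · exact boost_measurable (measurable_const.mul hGm) hxm
    · exact boost_measurable (hGm.add_const δ) hxm
  have hmargin : ∀ t, min (G t + δ) (Kr * G t) ≤ ‖w t‖ := by
    intro t
    simp only [hw]
    split_ifs with h1
    · exact le_trans (min_le_right _ _)
        (boost_norm_ge (by have := hG0 t; positivity) _)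
    · exact le_trans (min_le_left _ _)
        (boost_norm_ge (by have := hG0 t; positivity) _)
  have hdiff : ∀ t, ‖w t - x t‖ ≤ if G t ≤ η then Kr * G t else δ := by
    intro t
    simp only [hw]
    split_ifs with h1
    · refine le_trans (boost_dist _ _) (max_le ?_ (by have := hG0 t; positivity))
      have := hx t; have := hG0 t
      nlinarith
    · refine le_trans (boost_dist _ _) (max_le ?_ (le_of_lt hδpos))
      have := hx t
      linarith
  -- integral bound
  have hEbound : Ee μ p (w - ⇑x) ≤ (ENNReal.ofReal ε) ^ pr := by
    have hsplit : Ee μ p (w - ⇑x) =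
        (∫⁻ t in A n, (‖w t - x t‖₊ : ℝ≥0∞) ^ pr ∂μ) +
        (∫⁻ t in (A n)ᶜ, (‖w t - x t‖₊ : ℝ≥0∞) ^ pr ∂μ) := by
      rw [Ee, ← MeasureTheory.lintegral_add_compl _ (hAm n)]
      rfl
    have hb1 : (∫⁻ t in A n, (‖w t - x t‖₊ : ℝ≥0∞) ^ pr ∂μ) ≤ τ := by
      have hle : (∫⁻ t in A n, (‖w t - x t‖₊ : ℝ≥0∞) ^ pr ∂μ) ≤
          ∫⁻ t in A n, Krp * d t ∂μ := by
        apply MeasureTheory.setLIntegral_mono (measurable_const.mul hdm)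
        intro t ht
        simp only [hA, Set.mem_setOf_eq] at ht
        have h2 : ‖w t - x t‖ ≤ Kr * G t := by
          have := hdiff t; simp only [if_pos (show G t ≤ η from ht)] at this; exact this
        calc (‖w t - x t‖₊ : ℝ≥0∞) ^ pr ≤ (ENNReal.ofReal (Kr * G t)) ^ pr := by
              apply ENNReal.rpow_le_rpow _ (le_of_lt hpr)
              rw [← enorm_eq_nnnorm, ← ofReal_norm]
              exact ENNReal.ofReal_le_ofReal h2
        _ = Krp * d t := by
              rw [ENNReal.ofReal_mul (le_of_lt hKpos),
                ENNReal.mul_rpow_of_nonneg _ _ (le_of_lt hpr)]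
      rw [MeasureTheory.lintegral_const_mul' _ _ hKrptop] at hle
      have : ∫⁻ t in A n, d t ∂μ = ν (A n) := by
        rw [hν, MeasureTheory.withDensity_apply _ (hAm n)]
      rw [this] at hle
      calc (∫⁻ t in A n, (‖w t - x t‖₊ : ℝ≥0∞) ^ pr ∂μ) ≤ Krp * ν (A n) := hle
      _ ≤ Krp * (τ / Krp) := mul_le_mul_right (le_of_lt hn) _
      _ = τ := ENNReal.mul_div_cancel hKrp0 hKrptop
    have hb2 : (∫⁻ t in (A n)ᶜ, (‖w t - x t‖₊ : ℝ≥0∞) ^ pr ∂μ) ≤ τ := by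
      have hle : (∫⁻ t in (A n)ᶜ, (‖w t - x t‖₊ : ℝ≥0∞) ^ pr ∂μ) ≤
          ∫⁻ _ in (A n)ᶜ, (ENNReal.ofReal δ) ^ pr ∂μ := by
        apply MeasureTheory.setLIntegral_mono measurable_const
        intro t ht
        simp only [hA, Set.mem_compl_iff, Set.mem_setOf_eq, not_le] at ht
        have h2 : ‖w t - x t‖ ≤ δ := by
          have := hdiff t; simp only [if_neg (show ¬ G t ≤ η from not_le.mpr ht)] at this; exact this
        apply ENNReal.rpow_le_rpow _ (le_of_lt hpr)
        rw [← enorm_eq_nnnorm, ← ofReal_norm]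
        exact ENNReal.ofReal_le_ofReal h2
      rw [MeasureTheory.setLIntegral_const] at hle
      exact le_trans hle hδkey
    calc Ee μ p (w - ⇑x) ≤ τ + τ := by rw [hsplit]; exact add_le_add hb1 hb2
    _ = (ENNReal.ofReal ε) ^ pr := ENNReal.add_halves _
  -- build x'
  have hEfin : Ee μ p (w - ⇑x) < ⊤ := lt_of_le_of_lt hEbound
    (ENNReal.rpow_lt_top_of_nonneg (le_of_lt hpr) ENNReal.ofReal_ne_top)
  obtain ⟨x', hx'⟩ := exists_Lp hμ1 hp w hwm x hEfin
  refine ⟨δ, hδpos, x', ?_, ?_⟩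
  · apply dist_le_of_Ee hμ1 hp (le_of_lt hε)
    rw [hx']
    refine le_trans (Ee_mono hμ1 hp ?_) hEbound
    intro t
    simp only [Pi.sub_apply]
    rw [norm_sub_rev]
  · intro t
    rw [hx']
    exact hmargin t

lemma defeat (G : K → ℝ) (hGm : Measurable G) (hG0 : ∀ t, 0 ≤ G t)
    (δ lam : ℝ) (hδ : 0 < δ) (hlam : 0 < lam) (hlam2 : lam ≤ 2)
    (xi y : Lp ℂ p μ) (hxi : ∀ t, min (G t + δ) ((2 / lam) * G t) ≤ ‖xi t‖)
    (hdist : dist xi y < δ) :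
    ∃ z : Lp ℂ p μ, (∀ t, G t ≤ ‖z t‖) ∧ dist y z ≤ (lam / 2) * dist xi y := by
  have hpr := pr_pos (p := p) hp
  set pr := p.toReal with hprdef
  have hym : Measurable (⇑y) := (coe_sm hμ1 hp y).measurable
  set w : K → ℂ := fun t => boost (G t) (y t) with hw
  have hwm : Measurable w := boost_measurable hGm hym
  have hpen : ∀ t, ‖w t - y t‖ ≤ (lam / 2) * ‖xi t - y t‖ := by
    intro t
    refine le_trans (boost_dist _ _) (max_le ?_ (by positivity))
    by_cases hy : G t ≤ ‖y t‖
    · have : (0:ℝ) ≤ ‖xi t - y t‖ := norm_nonneg _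
      nlinarith
    · push_neg at hy
      have hpt : ‖xi t - y t‖ ≤ dist xi y := ptwise_dist hμ1 hp xi y t
      have hnorm : ‖xi t‖ - ‖y t‖ ≤ ‖xi t - y t‖ := by
        have := norm_sub_norm_le (xi t) (y t)
        linarith [abs_le.mp (abs_norm_sub_norm_le (xi t) (y t))]
      have hcase : ¬ (G t + δ ≤ ‖xi t‖) := by
        intro hcon
        have : δ < δ := by
          calc δ = (G t + δ) - G t := by ring
          _ ≤ ‖xi t‖ - ‖y t‖ := by linarith
          _ ≤ ‖xi t - y t‖ := hnorm
          _ ≤ dist xi y := hpt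
          _ < δ := hdist
        exact lt_irrefl δ this
      have hmul : (2 / lam) * G t ≤ ‖xi t‖ := by
        rcases le_total (G t + δ) ((2/lam) * G t) with h | h
        · exfalso
          apply hcase
          have h2 := hxi t
          rw [min_eq_left h] at h2
          exact h2
        · have h2 := hxi t
          rw [min_eq_right h] at h2
          exact h2
      have h2lam : (1:ℝ) ≤ 2 / lam := by
        rw [le_div_iff₀ hlam, one_mul]; exact hlam2
      have hstep : (2 / lam) * (G t - ‖y t‖) ≤ ‖xi t - y t‖ := by
        have hy0 : (0:ℝ) ≤ ‖y t‖ := norm_nonneg _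
        have hmid : (2 / lam) * (G t - ‖y t‖) ≤ (2/lam) * G t - ‖y t‖ := by
          nlinarith
        linarith [hnorm, hmul]
      calc G t - ‖y t‖ = (lam / 2) * ((2 / lam) * (G t - ‖y t‖)) := by
            field_simp
      _ ≤ (lam / 2) * ‖xi t - y t‖ := by
            apply mul_le_mul_of_nonneg_left hstep (by positivity)
  have hEb : Ee μ p (w - ⇑y) ≤ (ENNReal.ofReal ((lam/2) * dist xi y)) ^ pr := by
    have h1 : Ee μ p (w - ⇑y) ≤
        ∫⁻ t, (ENNReal.ofReal ((lam/2) * ‖xi t - y t‖)) ^ pr ∂μ := by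
      apply MeasureTheory.lintegral_mono
      intro t
      apply ENNReal.rpow_le_rpow _ (le_of_lt hpr)
      rw [← enorm_eq_nnnorm, ← ofReal_norm]
      exact ENNReal.ofReal_le_ofReal (hpen t)
    have h2 : ∀ t, (ENNReal.ofReal ((lam/2) * ‖xi t - y t‖)) ^ pr =
        (ENNReal.ofReal (lam/2)) ^ pr * (‖(⇑xi - ⇑y) t‖₊ : ℝ≥0∞) ^ pr := by
      intro t
      rw [ENNReal.ofReal_mul (by positivity), ENNReal.mul_rpow_of_nonneg _ _ (le_of_lt hpr)]
      congr 2
      rw [← enorm_eq_nnnorm, ← ofReal_norm]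
      rfl
    rw [show (fun t => (ENNReal.ofReal ((lam/2) * ‖xi t - y t‖)) ^ pr) =
      fun t => (ENNReal.ofReal (lam/2)) ^ pr * (‖(⇑xi - ⇑y) t‖₊ : ℝ≥0∞) ^ pr from funext h2] at h1
    rw [MeasureTheory.lintegral_const_mul' _ _
      (ne_of_lt (ENNReal.rpow_lt_top_of_nonneg (le_of_lt hpr) ENNReal.ofReal_ne_top))] at h1
    calc Ee μ p (w - ⇑y) ≤ (ENNReal.ofReal (lam/2)) ^ pr * Ee μ p (⇑xi - ⇑y) := h1
    _ = (ENNReal.ofReal (lam/2)) ^ pr * (ENNReal.ofReal (dist xi y)) ^ pr := by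
        rw [Ee_dist hμ1 hp]
    _ = (ENNReal.ofReal ((lam/2) * dist xi y)) ^ pr := by
        rw [ENNReal.ofReal_mul (by positivity),
          ENNReal.mul_rpow_of_nonneg _ _ (le_of_lt hpr)]
  have hEfin : Ee μ p (w - ⇑y) < ⊤ := lt_of_le_of_lt hEb
    (ENNReal.rpow_lt_top_of_nonneg (le_of_lt hpr) ENNReal.ofReal_ne_top)
  obtain ⟨z, hz⟩ := exists_Lp hμ1 hp w hwm y hEfin
  refine ⟨z, ?_, ?_⟩
  · intro t
    rw [hz]
    exact boost_norm_ge (hG0 t) _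
  · apply dist_le_of_Ee hμ1 hp (by positivity)
    rw [hz]
    refine le_trans (Ee_mono hμ1 hp ?_) hEb
    intro t
    simp only [Pi.sub_apply]
    rw [norm_sub_rev]

end Facts

structure PState {K : Type*} [MeasurableSpace K] (μ : MeasureTheory.Measure K)
    (p : ℝ≥0∞) [Fact (1 ≤ p)] where
  G : K → ℝ
  x : Lp ℂ p μ
  r : ℝ
  hGm : Measurable G
  hG0 : ∀ t, 0 ≤ G t
  hGfin : ∫⁻ t, (ENNReal.ofReal (G t)) ^ p.toReal ∂μ < ⊤
  hx : ∀ t, G t ≤ ‖x t‖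
  hr : 0 < r

section Step

variable (hμ1 : ∀ t : K, 1 ≤ μ {t}) (hp : p ≠ ⊤)
include hμ1 hp

lemma step_ex (S : Set (Lp ℂ p μ)) (lam : ℝ) (hlam : 0 < lam) (hlam1 : lam < 1)
    (s : PState μ p) :
    ∃ s' : PState μ p, (∀ t, s.G t ≤ s'.G t) ∧ dist s.x s'.x ≤ s.r / 2 ∧ s'.r ≤ s.r / 8 ∧
      ( (Metric.closedBall s'.x s'.r ∩ S = ∅) ∨
        ( ( ∀ f : Lp ℂ p μ, (∀ t, s.G t ≤ ‖f t‖) → f ∈ Metric.ball s.x (s.r / 2) →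
              ∀ ρ > 0, (Metric.ball f ρ ∩ S).Nonempty ) ∧
          dist s.x s'.x ≤ s.r / 8 ∧
          ∃ δ > 0, ∀ t, min (s.G t + δ) ((2 / lam) * s.G t) ≤ s'.G t ) ) := by
  have hpr := pr_pos (p := p) hp
  by_cases hcase : ∃ x' : Lp ℂ p μ, (∀ t, s.G t ≤ ‖x' t‖) ∧
      x' ∈ Metric.ball s.x (s.r / 2) ∧ ∃ ρ > 0, Metric.ball x' ρ ∩ S = ∅
  · obtain ⟨x', hx'G, hx'b, ρ, hρ, hempty⟩ := hcase
    refine ⟨⟨s.G, x', min (ρ / 2) (s.r / 8), s.hGm, s.hG0, s.hGfin, hx'G, ?_⟩,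
      fun t => le_rfl, ?_, ?_, Or.inl ?_⟩
    · have := s.hr; positivity
    · rw [dist_comm]
      exact le_of_lt (Metric.mem_ball.mp hx'b)
    · exact min_le_right _ _
    · apply Set.eq_empty_of_subset_empty
      rw [← hempty]
      apply Set.inter_subset_inter_left
      refine le_trans (Metric.closedBall_subset_closedBall (min_le_left _ _)) ?_
      exact Metric.closedBall_subset_ball (by linarith)
  · push_neg at hcase
    have hK1 : (1:ℝ) ≤ 2 / lam := by
      rw [le_div_iff₀ hlam, one_mul]; linarith
    obtain ⟨δ, hδ, x', hdistx, hmargin⟩ := deepen hμ1 hp s.G s.hGm s.hG0 s.hGfin s.x s.hx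
      (s.r / 8) (by have := s.hr; positivity) (2 / lam) hK1
    refine ⟨⟨fun t => min (s.G t + δ) ((2 / lam) * s.G t), x', s.r / 8,
      (s.hGm.add_const δ).min (measurable_const.mul s.hGm), ?_, ?_, hmargin,
      by have := s.hr; positivity⟩, ?_, ?_, le_rfl, Or.inr ⟨?_, hdistx, δ, hδ, fun t => le_rfl⟩⟩
    · intro t
      have h1 := s.hG0 t
      exact le_min (by linarith) (by positivity)
    · -- finiteness
      have hb : ∀ t, (ENNReal.ofReal (min (s.G t + δ) ((2 / lam) * s.G t))) ^ p.toReal ≤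
          (ENNReal.ofReal (2 / lam)) ^ p.toReal * (ENNReal.ofReal (s.G t)) ^ p.toReal := by
        intro t
        rw [← ENNReal.mul_rpow_of_nonneg _ _ (le_of_lt hpr), ← ENNReal.ofReal_mul (by positivity)]
        exact ENNReal.rpow_le_rpow (ENNReal.ofReal_le_ofReal (min_le_right _ _)) (le_of_lt hpr)
      calc ∫⁻ t, (ENNReal.ofReal (min (s.G t + δ) ((2 / lam) * s.G t))) ^ p.toReal ∂μ
          ≤ ∫⁻ t, (ENNReal.ofReal (2 / lam)) ^ p.toReal * (ENNReal.ofReal (s.G t)) ^ p.toReal ∂μ :=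
            MeasureTheory.lintegral_mono hb
      _ = (ENNReal.ofReal (2 / lam)) ^ p.toReal * ∫⁻ t, (ENNReal.ofReal (s.G t)) ^ p.toReal ∂μ :=
            MeasureTheory.lintegral_const_mul' _ _
              (ne_of_lt (ENNReal.rpow_lt_top_of_nonneg (le_of_lt hpr) ENNReal.ofReal_ne_top))
      _ < ⊤ := ENNReal.mul_lt_top
            (ENNReal.rpow_lt_top_of_nonneg (le_of_lt hpr) ENNReal.ofReal_ne_top) s.hGfin
    · intro t
      have h1 := s.hG0 t
      exact le_min (by linarith) (by nlinarith)
    · linarith [s.hr]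
    · intro f hfG hfb ρ hρ
      exact hcase f hfG hfb ρ hρ

end Step

def iterSt {A : Type*} (s0 : A) (st : ℕ → A → A) : ℕ → A
  | 0 => s0
  | n + 1 => st n (iterSt s0 st n)

end Stmt10Aux

open Stmt10Aux in
/-- For a discrete hypergroup with Haar measure `μ{x} = 1/(δ_x * δ_{x⁻})({e})`, one has
`μ{x} ≥ 1` for all `x`, and hence for every `g ∈ L^p(K,μ)` the set `{f : |f| ≥ |g|}` is not
`σ`-porous. -/
theorem stmt_10 {K : Type*} [MeasurableSpace K] [MeasurableSingletonClass K]
    (H : DiscreteHypergroup K)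
    (μ : Measure K) (hμ : ∀ x : K, μ {x} = (H.conv x (H.inv x) {H.e})⁻¹)
    (p : ℝ≥0∞) [Fact (1 ≤ p)] (hp : p ≠ ⊤) :
    (∀ x : K, 1 ≤ μ {x}) ∧
    ∀ g : Lp ℂ p μ, ¬ SigmaPorous {f : Lp ℂ p μ | ∀ᵐ x ∂μ, ‖g x‖ ≤ ‖f x‖} := by
  classical
  have hμ1 : ∀ x : K, 1 ≤ μ {x} := by
    intro x
    rw [hμ x, ENNReal.one_le_inv]
    haveI := H.prob x (H.inv x)
    exact prob_le_one
  refine ⟨hμ1, ?_⟩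
  intro g hσ
  obtain ⟨S, hS, hE⟩ := hσ
  choose lam hlam0 hlam1 hPor using hS
  have hg0fin : ∫⁻ t, (ENNReal.ofReal (‖g t‖)) ^ p.toReal ∂μ < ⊤ := by
    have heq : (fun t => (ENNReal.ofReal ‖g t‖) ^ p.toReal) =
        fun t => (‖g t‖₊ : ℝ≥0∞) ^ p.toReal := by
      funext t; rw [ofReal_norm, enorm_eq_nnnorm]
    show (∫⁻ t, (ENNReal.ofReal ‖g t‖) ^ p.toReal ∂μ) < ⊤
    rw [heq]
    exact Ee_coe_lt_top hμ1 hp g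
  set s0 : PState μ p := ⟨fun t => ‖g t‖, g, 1,
    (coe_sm hμ1 hp g).measurable.norm, fun t => norm_nonneg _, hg0fin,
    fun t => le_rfl, one_pos⟩ with hs0
  have step : ∀ n (s : PState μ p), ∃ s' : PState μ p,
      (∀ t, s.G t ≤ s'.G t) ∧ dist s.x s'.x ≤ s.r / 2 ∧ s'.r ≤ s.r / 8 ∧
      ( (Metric.closedBall s'.x s'.r ∩ S n = ∅) ∨
        ( ( ∀ f : Lp ℂ p μ, (∀ t, s.G t ≤ ‖f t‖) → f ∈ Metric.ball s.x (s.r / 2) →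
              ∀ ρ > 0, (Metric.ball f ρ ∩ S n).Nonempty ) ∧
          dist s.x s'.x ≤ s.r / 8 ∧
          ∃ δ > 0, ∀ t, min (s.G t + δ) ((2 / lam n) * s.G t) ≤ s'.G t ) ) :=
    fun n s => step_ex hμ1 hp (S n) (lam n) (hlam0 n) (hlam1 n) s
  set seq : ℕ → PState μ p := iterSt s0 (fun n s => (step n s).choose) with hseqdef
  have hseq : ∀ n, seq (n + 1) = (step n (seq n)).choose := fun n => rfl
  have spec : ∀ n, (∀ t, (seq n).G t ≤ (seq (n+1)).G t) ∧
      dist (seq n).x (seq (n+1)).x ≤ (seq n).r / 2 ∧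
      (seq (n+1)).r ≤ (seq n).r / 8 ∧
      ( (Metric.closedBall (seq (n+1)).x (seq (n+1)).r ∩ S n = ∅) ∨
        ( ( ∀ f : Lp ℂ p μ, (∀ t, (seq n).G t ≤ ‖f t‖) →
              f ∈ Metric.ball (seq n).x ((seq n).r / 2) →
              ∀ ρ > 0, (Metric.ball f ρ ∩ S n).Nonempty ) ∧
          dist (seq n).x (seq (n+1)).x ≤ (seq n).r / 8 ∧
          ∃ δ > 0, ∀ t, min ((seq n).G t + δ) ((2 / lam n) * (seq n).G t) ≤ (seq (n+1)).G t ) ) := by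
    intro n
    rw [hseq n]
    exact (step n (seq n)).choose_spec
  have hrpos : ∀ n, 0 < (seq n).r := fun n => (seq n).hr
  have hr8 : ∀ n, (seq (n+1)).r ≤ (seq n).r / 8 := fun n => (spec n).2.2.1
  have hdistc : ∀ n, dist (seq n).x (seq (n+1)).x ≤ (seq n).r / 2 := fun n => (spec n).2.1
  have hGstep : ∀ n t, (seq n).G t ≤ (seq (n+1)).G t := fun n => (spec n).1
  have hGmono : ∀ m n, m ≤ n → ∀ t, (seq m).G t ≤ (seq n).G t := by
    intro m n hmn
    induction n, hmn using Nat.le_induction with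
    | base => exact fun t => le_rfl
    | succ n hmn ih => exact fun t => le_trans (ih t) (hGstep n t)
  have hrgeo : ∀ j k, (seq (j + k)).r ≤ (seq j).r * (1/8)^k := by
    intro j k
    induction k with
    | zero => simp
    | succ k ih =>
      calc (seq (j + (k+1))).r ≤ (seq (j + k)).r / 8 := hr8 _
      _ ≤ ((seq j).r * (1/8)^k) / 8 := by linarith
      _ = (seq j).r * (1/8)^(k+1) := by ring
  have hrgeo0 : ∀ n, (seq n).r ≤ (seq 0).r * (1/8)^n := by
    intro n
    have := hrgeo 0 n
    simpa using this
  have hrlim : Filter.Tendsto (fun n => (seq n).r) Filter.atTop (nhds 0) := by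
    apply squeeze_zero (fun n => (hrpos n).le) hrgeo0
    have h1 : Filter.Tendsto (fun n : ℕ => (1/8 : ℝ)^n) Filter.atTop (nhds 0) :=
      tendsto_pow_atTop_nhds_zero_of_lt_one (by norm_num) (by norm_num)
    have := h1.const_mul ((seq 0).r)
    simpa using this
  have hcauchy : CauchySeq (fun n => (seq n).x) := by
    apply cauchySeq_of_le_geometric (1/8 : ℝ) ((seq 0).r / 2) (by norm_num)
    intro n
    calc dist (seq n).x (seq (n+1)).x ≤ (seq n).r / 2 := hdistc n
    _ ≤ ((seq 0).r * (1/8)^n) / 2 := by linarith [hrgeo0 n]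
    _ = ((seq 0).r / 2) * (1/8)^n := by ring
  obtain ⟨xinf, hxinf⟩ := cauchySeq_tendsto_of_complete hcauchy
  have hdistinf : ∀ j, dist (seq j).x xinf ≤ (seq j).r * (4/7) := by
    intro j
    have hu : ∀ k, dist ((fun k => (seq (j + k)).x) k) ((fun k => (seq (j + k)).x) (k+1)) ≤
        ((seq j).r / 2) * (1/8)^k := by
      intro k
      show dist (seq (j + k)).x (seq (j + k + 1)).x ≤ ((seq j).r / 2) * (1/8)^k
      calc dist (seq (j + k)).x (seq (j + k + 1)).x ≤ (seq (j + k)).r / 2 := hdistc _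
      _ ≤ ((seq j).r * (1/8)^k) / 2 := by linarith [hrgeo j k]
      _ = ((seq j).r / 2) * (1/8)^k := by ring
    have ha : Filter.Tendsto (fun k => (seq (j + k)).x) Filter.atTop (nhds xinf) := by
      have h2 : (fun k : ℕ => j + k) = fun k : ℕ => k + j := funext fun k => Nat.add_comm j k
      have h3 : Filter.Tendsto (fun k : ℕ => j + k) Filter.atTop Filter.atTop := by
        rw [h2]; exact Filter.tendsto_add_atTop_nat j
      exact hxinf.comp h3
    have hmain := dist_le_of_le_geometric_of_tendsto₀ (1/8 : ℝ) ((seq j).r / 2)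
      (by norm_num) hu ha
    have heq : ((seq j).r / 2) / (1 - 1/8 : ℝ) = (seq j).r * (4/7) := by
      norm_num; ring
    simp only [Nat.add_zero] at hmain
    rw [heq] at hmain
    exact hmain
  have hxinfG : ∀ m t, (seq m).G t ≤ ‖xinf t‖ := by
    intro m t
    by_contra hcon
    push_neg at hcon
    have hεpos : 0 < (seq m).G t - ‖xinf t‖ := by linarith
    have h4 : Filter.Tendsto (fun n => (seq n).r * (4/7)) Filter.atTop (nhds 0) := by
      have := hrlim.const_mul (4/7 : ℝ)
      simpa [mul_comm] using this
    have hev : ∀ᶠ k in Filter.atTop, (seq k).r * (4/7) < (seq m).G t - ‖xinf t‖ :=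
      Filter.Tendsto.eventually_lt_const hεpos h4
    obtain ⟨k, hk1, hk2⟩ := (hev.and (Filter.eventually_ge_atTop m)).exists
    have hpt : ‖(⇑((seq k).x) - ⇑xinf) t‖ ≤ dist ((seq k).x) xinf :=
      ptwise_dist hμ1 hp _ _ t
    have hnorm : ‖(seq k).x t‖ ≤ ‖xinf t‖ + ‖(⇑((seq k).x) - ⇑xinf) t‖ := by
      simp only [Pi.sub_apply]
      have hrw : ((seq k).x t : ℂ) = xinf t + ((seq k).x t - xinf t) := by ring
      calc ‖(seq k).x t‖ = ‖xinf t + ((seq k).x t - xinf t)‖ := by rw [← hrw]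
      _ ≤ ‖xinf t‖ + ‖(seq k).x t - xinf t‖ := norm_add_le _ _
    have hchain : (seq m).G t ≤ ‖xinf t‖ + (seq k).r * (4/7) := by
      calc (seq m).G t ≤ (seq k).G t := hGmono m k hk2 t
      _ ≤ ‖(seq k).x t‖ := (seq k).hx t
      _ ≤ ‖xinf t‖ + ‖(⇑((seq k).x) - ⇑xinf) t‖ := hnorm
      _ ≤ ‖xinf t‖ + dist ((seq k).x) xinf := by linarith
      _ ≤ ‖xinf t‖ + (seq k).r * (4/7) := by linarith [hdistinf k]
    linarith
  have hxinfE : xinf ∈ ⋃ n, S n := by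
    rw [← hE]
    exact MeasureTheory.ae_of_all μ (fun t => hxinfG 0 t)
  obtain ⟨m, hm⟩ := Set.mem_iUnion.mp hxinfE
  rcases (spec m).2.2.2 with hA | ⟨hdens, hd8, δm, hδm, hGstepm⟩
  · have h1 : xinf ∈ Metric.closedBall (seq (m+1)).x (seq (m+1)).r := by
      rw [Metric.mem_closedBall, dist_comm]
      calc dist (seq (m+1)).x xinf ≤ (seq (m+1)).r * (4/7) := hdistinf (m+1)
      _ ≤ (seq (m+1)).r := by nlinarith [hrpos (m+1)]
    exact Set.eq_empty_iff_forall_notMem.mp hA xinf ⟨h1, hm⟩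
  · have hdstarpos : 0 < min (δm/2) ((seq m).r/16) :=
      lt_min (by linarith) (by linarith [hrpos m])
    obtain ⟨y, hyb, hyne, hole⟩ := hPor m xinf hm (min (δm/2) ((seq m).r/16)) hdstarpos
    have hd0 : 0 < dist xinf y := dist_pos.mpr (fun h => hyne h.symm)
    have hdlt : dist xinf y < min (δm/2) ((seq m).r/16) := by
      rw [dist_comm]; exact Metric.mem_ball.mp hyb
    have hlam2 : lam m ≤ 2 := by linarith [hlam1 m]
    have hxiarg : ∀ t, min ((seq m).G t + δm) ((2 / lam m) * (seq m).G t) ≤ ‖xinf t‖ :=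
      fun t => le_trans (hGstepm t) (hxinfG (m+1) t)
    have hdistxy : dist xinf y < δm := by
      have := min_le_left (δm/2) ((seq m).r/16)
      linarith
    obtain ⟨z, hzG, hzd⟩ := defeat hμ1 hp (seq m).G (seq m).hGm (seq m).hG0 δm (lam m)
      hδm (hlam0 m) hlam2 xinf y hxiarg hdistxy
    have hzy : dist y z < lam m * dist xinf y := by
      apply lt_of_le_of_lt hzd
      have h0 := hlam0 m
      nlinarith
    have hzball2 : z ∈ Metric.ball (seq m).x ((seq m).r / 2) := by
      rw [Metric.mem_ball]
      have h1 : dist z (seq m).x ≤ dist z y + dist y xinf + dist xinf (seq m).x :=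
        dist_triangle4 z y xinf (seq m).x
      have h2 : dist z y ≤ (lam m / 2) * dist xinf y := by
        rw [dist_comm]; exact hzd
      have h2' : dist z y ≤ dist xinf y := by nlinarith
      have h3 : dist y xinf < min (δm/2) ((seq m).r/16) := Metric.mem_ball.mp hyb
      have h4 : dist xinf (seq m).x ≤ dist xinf (seq (m+1)).x + dist (seq (m+1)).x (seq m).x :=
        dist_triangle _ _ _
      have h5 : dist xinf (seq (m+1)).x ≤ (seq (m+1)).r * (4/7) := by
        rw [dist_comm]; exact hdistinf (m+1)
      have h6 : dist (seq (m+1)).x (seq m).x ≤ (seq m).r / 8 := by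
        rw [dist_comm]; exact hd8
      have h7 : (seq (m+1)).r ≤ (seq m).r / 8 := hr8 m
      have h9 : min (δm/2) ((seq m).r/16) ≤ (seq m).r / 16 := min_le_right _ _
      have h10 : 0 < (seq m).r := hrpos m
      have h11 : (seq (m+1)).r * (4/7) ≤ ((seq m).r / 8) * (4/7) := by nlinarith
      linarith
    obtain ⟨wpt, hw1, hw2⟩ := hdens z hzG hzball2 (lam m * dist xinf y - dist y z)
      (by linarith)
    have hwy : wpt ∈ Metric.ball y (lam m * dist xinf y) := by
      rw [Metric.mem_ball]
      have hw1' : dist wpt z < lam m * dist xinf y - dist y z := Metric.mem_ball.mp hw1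
      have htr : dist wpt y ≤ dist wpt z + dist z y := dist_triangle _ _ _
      have hcomm : dist z y = dist y z := dist_comm _ _
      linarith
    exact Set.eq_empty_iff_forall_notMem.mp hole wpt ⟨hwy, hw2⟩
end

section
/- Let $\Omega$ be a locally compact Hausdorff space with Radon measure $\mu$, $w:\Omega\to(0,\infty)$ bounded measurable, and $\alpha:\Omega\to\Omega$ bi-measurable with $\|f\circ\alpha^{\pm1}\|_\infty=\|f\|_\infty$ for all $f\in L^\infty$. Let $(\gamma_n)_n\subseteq\mathbb{N}$ be unbounded and $(A_n)_n$ disjoint subsets of $\Omega$ with $\mu(A_n)>0$ such that $j_{\alpha,w}:=\sum_n \big(\prod_{k=1}^{\gamma_n}(w\circ\alpha^{-k})\big)^{-1}\chi_{A_n}\in L^\infty(\Omega,\mu)$. Then $\{f\in L^\infty: \|T_{\alpha,w,\infty}^{\gamma_n}f\|_\infty\geq 1 \text{ for all } n\}$ is not $\sigma$-porous; in particular the set of non-hypercyclic vectors of $(T_{\alpha,w,\infty}^{\gamma_n})_n$ is not $\sigma$-porous. -/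
open MeasureTheory Metric Set ENNReal

/-- The `n`-th power of the weighted composition operator `T_{α,w} f = w · (f ∘ α)`, computed
pointwise: `(T^n f)(x) = (∏_{k=0}^{n-1} w(α^k x)) f(α^n x)`. -/
noncomputable def TinfPow {Ω : Type*} (α : Ω ≃ Ω) (w : Ω → ℝ) (n : ℕ) (f : Ω → ℂ) :
    Ω → ℂ :=
  fun x => (∏ k ∈ Finset.range n, (w ((⇑α)^[k] x) : ℂ)) * f ((⇑α)^[n] x)

lemma porous_closure_interior {X : Type*} [MetricSpace X] {lam : ℝ} {E : Set X}
    (hlam : 0 < lam) (h : Porous lam E) : interior (closure E) = ∅ := by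
  rw [Set.eq_empty_iff_forall_notMem]
  intro z hz
  rcases Metric.isOpen_iff.1 isOpen_interior z hz with ⟨r, hr, hball⟩
  have hzcl : z ∈ closure E := interior_subset hz
  rcases Metric.mem_closure_iff.1 hzcl (r/2) (by positivity) with ⟨x, hxE, hxz⟩
  rcases h x hxE (r/4) (by positivity) with ⟨y, hy, hyx, hhole⟩
  have hd : 0 < dist x y := dist_pos.2 fun h' => hyx h'.symm
  have hyx4 : dist y x < r/4 := Metric.mem_ball.1 hy
  have hycl : y ∈ closure E := by
    apply interior_subset
    apply hball
    rw [Metric.mem_ball]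
    calc dist y z ≤ dist y x + dist x z := dist_triangle _ _ _
      _ < r/4 + r/2 := by rw [dist_comm x z]; exact add_lt_add hyx4 hxz
      _ < r := by linarith
  rcases Metric.mem_closure_iff.1 hycl (lam * dist x y) (by positivity) with ⟨b, hbE, hyb⟩
  have : b ∈ Metric.ball y (lam * dist x y) ∩ E := ⟨by rwa [Metric.mem_ball, dist_comm], hbE⟩
  rw [hhole] at this
  exact this

lemma not_sigmaPorous_of_ball {X : Type*} [MetricSpace X] [CompleteSpace X] {E : Set X}
    {x : X} {r : ℝ} (hr : 0 < r) (hsub : Metric.ball x r ⊆ E) : ¬ SigmaPorous E := by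
  rintro ⟨S, hS, hE⟩
  have hop : ∀ n, IsOpen (closure (S n))ᶜ := fun n => isClosed_closure.isOpen_compl
  have hdense : ∀ n, Dense (closure (S n))ᶜ := by
    intro n
    obtain ⟨lam, h0, _, hp⟩ := hS n
    have hint := porous_closure_interior h0 hp
    rwa [← interior_eq_empty_iff_dense_compl]
  have hD : Dense (⋂ n, (closure (S n))ᶜ) := dense_iInter_of_isOpen hop hdense
  obtain ⟨y, hy1, hy2⟩ := hD.inter_open_nonempty (Metric.ball x r) isOpen_ball
    ⟨x, Metric.mem_ball_self hr⟩
  have : y ∈ E := hsub hy1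
  rw [hE] at this
  obtain ⟨n, hn⟩ := Set.mem_iUnion.1 this
  exact (Set.mem_iInter.1 hy2 n) (subset_closure hn)

lemma le_essSup_of_meas {Ω : Type*} [MeasurableSpace Ω] {μ : Measure Ω} {u : Ω → ℝ≥0∞} {c : ℝ≥0∞}
    (h : μ {x | c ≤ u x} ≠ 0) : c ≤ essSup u μ := by
  by_contra h'
  push_neg at h'
  apply h
  have hae : μ {x | ¬ u x ≤ essSup u μ} = 0 := by
    have := ENNReal.ae_le_essSup (μ := μ) u
    rw [← ae_iff]
    filter_upwards [this] with x hx
    simpa using hx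
  refine measure_mono_null (fun x hx => ?_) hae
  simp only [Set.mem_setOf_eq] at hx ⊢
  exact fun hle => absurd (lt_of_le_of_lt (le_trans hx hle) h') (lt_irrefl _)

lemma not_dense_of_countable {X : Type*} [MetricSpace X] {D : Set X} (hD : D.Countable)
    (F : Set ℕ → X) (hsep : ∀ I I' : Set ℕ, I ≠ I' → 1 ≤ dist (F I) (F I')) : ¬ Dense D := by
  intro hd
  have hch : ∀ I : Set ℕ, ∃ d, d ∈ D ∧ dist (F I) d < 1/2 := by
    intro I
    obtain ⟨d, hd1, hd2⟩ := Metric.mem_closure_iff.1 (hd (F I)) (1/2) (by norm_num)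
    exact ⟨d, hd1, hd2⟩
  choose d hd1 hd2 using hch
  have hinj : Function.Injective d := by
    intro I I' hII
    by_contra hne
    have h1 := hsep I I' hne
    have : dist (F I) (F I') ≤ dist (F I) (d I) + dist (d I') (F I') := by
      rw [hII]; exact dist_triangle _ _ _
    rw [dist_comm (d I')] at this
    have := this.trans_lt (add_lt_add (hd2 I) (hd2 I'))
    norm_num at this
    linarith
  have : Countable ↥D := hD.to_subtype
  obtain ⟨e, he⟩ := exists_injective_nat ↥D
  exact Function.cantor_injective (fun I => e ⟨d I, hd1 I⟩)
    (fun I I' h => hinj (by simpa using Subtype.ext_iff.1 (he h)))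

/-- If `j_{α,w} = ∑_n (∏_{k=1}^{γ_n} w ∘ α^{-k})⁻¹ χ_{A_n} ∈ L^∞` for disjoint sets `A_n`
of positive measure and an unbounded `(γ_n)`, then `{f : ‖T^{γ_n} f‖_∞ ≥ 1 for all n}` is
not `σ`-porous; in particular the non-hypercyclic vectors of `(T^{γ_n})_n` form a
non-`σ`-porous set. -/
theorem stmt_14 {Ω : Type*} [TopologicalSpace Ω] [T2Space Ω] [LocallyCompactSpace Ω]
    [MeasurableSpace Ω] [BorelSpace Ω] (μ : Measure Ω) [μ.Regular]
    (w : Ω → ℝ) (hw0 : ∀ x, 0 < w x) (hwm : Measurable w) (hwb : ∃ C, ∀ x, w x ≤ C)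
    (α : Ω ≃ Ω) (hα : Measurable α) (hα' : Measurable α.symm)
    (hnorm : ∀ f : Ω → ℂ, eLpNorm (f ∘ ⇑α) ⊤ μ = eLpNorm f ⊤ μ ∧
      eLpNorm (f ∘ ⇑α.symm) ⊤ μ = eLpNorm f ⊤ μ)
    (γ : ℕ → ℕ) (hγ : ∀ M : ℕ, ∃ n, M ≤ γ n)
    (A : ℕ → Set Ω) (hAm : ∀ n, MeasurableSet (A n)) (hApos : ∀ n, 0 < μ (A n))
    (hAdisj : Pairwise (Function.onFun Disjoint A))
    (hj : MemLp (fun x : Ω => ∑' n : ℕ,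
      (A n).indicator (fun y => (∏ k ∈ Finset.Icc 1 (γ n), w ((⇑α.symm)^[k] y))⁻¹) x) ⊤ μ) :
    (¬ SigmaPorous {f : Lp ℂ ⊤ μ | ∀ n,
        1 ≤ eLpNorm (TinfPow α w (γ n) ⇑f) ⊤ μ}) ∧
    ¬ SigmaPorous {f : Lp ℂ ⊤ μ |
      ¬ Dense {g : Lp ℂ ⊤ μ | ∃ n, ⇑g =ᵐ[μ] TinfPow α w (γ n) ⇑f}} := by
  classical
  constructor
  · obtain ⟨f₀, key⟩ : ∃ f₀ : Lp ℂ ⊤ μ, ∀ f : Lp ℂ ⊤ μ, f ∈ Metric.ball f₀ 1 →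
        ∀ n, 1 ≤ eLpNorm (TinfPow α w (γ n) ⇑f) ⊤ μ := by
      set jf : Ω → ℝ := fun x : Ω => ∑' n : ℕ,
          (A n).indicator (fun y => (∏ k ∈ Finset.Icc 1 (γ n), w ((⇑α.symm)^[k] y))⁻¹) x with hjf
      have hαm : ∀ m : ℕ, Measurable ((⇑α)^[m]) := fun m => hα.iterate m
      have hcomp : ∀ (f : Ω → ℂ) (m : ℕ),
          eLpNorm (fun x => f ((⇑α)^[m] x)) ⊤ μ = eLpNorm f ⊤ μ := by
        intro f m
        induction m with
        | zero => simp
        | succ m ih =>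
          have : (fun x => f ((⇑α)^[m+1] x)) = (fun x => f ((⇑α)^[m] x)) ∘ ⇑α := by
            funext x; simp [Function.iterate_succ_apply]
          rw [this, (hnorm _).1, ih]
      have hnull : ∀ (N : Set Ω), μ N = 0 → ∀ m, μ ((⇑α)^[m] ⁻¹' N) = 0 := by
        intro N hN m
        set N' := toMeasurable μ N with hN'def
        have hN'm : MeasurableSet N' := measurableSet_toMeasurable μ N
        have hN'0 : μ N' = 0 := by rw [measure_toMeasurable]; exact hN
        have hsub : (⇑α)^[m] ⁻¹' N ⊆ (⇑α)^[m] ⁻¹' N' := fun x hx => subset_toMeasurable μ N hx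
        refine measure_mono_null hsub ?_
        set χ : Ω → ℂ := N'.indicator (fun _ => 1) with hχdef
        have hχm : AEStronglyMeasurable χ μ :=
          ((measurable_const.indicator hN'm)).aestronglyMeasurable
        have hχ0 : eLpNorm χ ⊤ μ = 0 := by
          rw [eLpNorm_eq_zero_iff hχm (by simp)]
          rw [indicator_ae_eq_zero]
          exact measure_mono_null Set.inter_subset_left hN'0
        have hχc : (fun x => χ ((⇑α)^[m] x)) = ((⇑α)^[m] ⁻¹' N').indicator (fun _ => (1:ℂ)) := by
          funext x
          simp only [hχdef]
          by_cases hx : (⇑α)^[m] x ∈ N'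
          · rw [Set.indicator_of_mem hx, Set.indicator_of_mem (show x ∈ (⇑α)^[m] ⁻¹' N' from hx)]
          · rw [Set.indicator_of_notMem hx,
              Set.indicator_of_notMem (show x ∉ (⇑α)^[m] ⁻¹' N' from hx)]
        have h2 : eLpNorm (fun x => χ ((⇑α)^[m] x)) ⊤ μ = 0 := by rw [hcomp, hχ0]
        rw [hχc, eLpNorm_eq_zero_iff ((measurable_const.indicator ((hαm m) hN'm)).aestronglyMeasurable)
          (by simp), indicator_ae_eq_zero] at h2
        have hsupp : (Function.support fun _ : Ω => (1:ℂ)) = Set.univ :=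
          Function.support_const one_ne_zero
        rwa [hsupp, Set.inter_univ] at h2
      have haesm : ∀ (g : Ω → ℂ), AEStronglyMeasurable g μ →
          ∀ m, AEStronglyMeasurable (fun x => g ((⇑α)^[m] x)) μ := by
        intro g hg m
        obtain ⟨g', hg'm, hgg'⟩ := hg
        refine ⟨fun x => g' ((⇑α)^[m] x), hg'm.comp_measurable (hαm m), ?_⟩
        have h0 : μ {y | g y ≠ g' y} = 0 := by rw [← ae_iff] at *; exact hgg'
        have : μ ((⇑α)^[m] ⁻¹' {y | g y ≠ g' y}) = 0 := hnull _ h0 m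
        rw [Filter.EventuallyEq, ae_iff]
        exact this
      have hsymm_iter : ∀ (k : ℕ) (z : Ω), (⇑α.symm)^[k] ((⇑α)^[k] z) = z := by
        intro k
        induction k with
        | zero => intro z; simp
        | succ k ih =>
          intro z
          rw [Function.iterate_succ_apply' (⇑α), Function.iterate_succ_apply (⇑α.symm),
            Equiv.symm_apply_apply]
          exact ih z
      have hiter_sub : ∀ (k N : ℕ), k ≤ N → ∀ x : Ω,
          (⇑α.symm)^[k] ((⇑α)^[N] x) = (⇑α)^[N-k] x := by
        intro k N hk x
        have h1 : (⇑α)^[N] x = (⇑α)^[k] ((⇑α)^[N-k] x) := by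
          rw [← Function.iterate_add_apply, Nat.add_sub_cancel' hk]
        rw [h1, hsymm_iter]
      have hjval : ∀ (n : ℕ) (x : Ω), x ∈ A n →
          jf x = (∏ k ∈ Finset.Icc 1 (γ n), w ((⇑α.symm)^[k] x))⁻¹ := by
        intro n x hx
        simp only [hjf]
        rw [tsum_eq_single n ?_]
        · rw [Set.indicator_of_mem hx]
        · intro m hmn
          rw [Set.indicator_of_notMem]
          exact fun hxm => (Set.disjoint_left.1 (hAdisj hmn) hxm) hx
      have hjnn : ∀ x, 0 ≤ jf x := by
        intro x
        apply tsum_nonneg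
        intro m
        exact Set.indicator_nonneg
          (fun y _ => inv_nonneg.2 (Finset.prod_nonneg fun k _ => (hw0 _).le)) x
      set J : ℝ≥0∞ := eLpNorm jf ⊤ μ with hJ
      have hJtop : J ≠ ⊤ := hj.2.ne
      have hJ0 : J ≠ 0 := by
        intro h0
        rw [hJ, eLpNorm_eq_zero_iff hj.1 (by simp)] at h0
        have hA0 : μ (A 0) = 0 := by
          refine measure_mono_null ?_ (by rw [Filter.EventuallyEq, ae_iff] at h0; exact h0)
          intro x hx
          have hpos : 0 < jf x := by
            rw [hjval 0 x hx]
            exact inv_pos.2 (Finset.prod_pos (fun k _ => hw0 _))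
          simp only [Set.mem_setOf_eq, Pi.zero_apply]
          exact hpos.ne'
        exact (hApos 0).ne' hA0
      obtain ⟨C₀, hC₀⟩ := hwb
      set C : ℝ := max C₀ 1 with hC
      have hwC : ∀ x, w x ≤ C := fun x => (hC₀ x).trans (le_max_left _ _)
      set M : ℝ := J.toReal + 2 with hM
      have hM0 : 0 < M := by
        have := ENNReal.toReal_nonneg (a := J); rw [hM]; linarith
      have hf₀mem : MemLp (fun _ : Ω => (M:ℂ)) ⊤ μ := memLp_top_const _
      refine ⟨hf₀mem.toLp _, ?_⟩
      intro f hfball n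
      set N := γ n with hNdef
      set P : Ω → ℝ := fun x => ∏ k ∈ Finset.range N, w ((⇑α)^[k] x) with hP
      have hPpos : ∀ x, 0 < P x := fun x => Finset.prod_pos (fun k _ => hw0 _)
      set Pe : Ω → ℝ≥0∞ := fun x => ENNReal.ofReal (P x) with hPe
      set Ln : ℝ≥0∞ := essSup Pe μ with hLn
      set Bset : Set Ω := (⇑α)^[N] ⁻¹' (A n) with hBset
      have hptws : ∀ x ∈ Bset, jf ((⇑α)^[N] x) = (P x)⁻¹ := by
        intro x hx
        rw [hjval n _ hx]
        congr 1
        rw [show (∏ k ∈ Finset.Icc 1 N, w ((⇑α.symm)^[k] ((⇑α)^[N] x)))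
            = ∏ k ∈ Finset.Icc 1 N, w ((⇑α)^[N - k] x) from
          Finset.prod_congr rfl (fun k hk => by
            rw [hiter_sub k N (Finset.mem_Icc.1 hk).2 x])]
        exact Finset.prod_bij' (fun k _ => N - k) (fun i _ => N - i)
          (fun k hk => by simp only [Finset.mem_Icc, Finset.mem_range] at hk ⊢; omega)
          (fun i hi => by simp only [Finset.mem_Icc, Finset.mem_range] at hi ⊢; omega)
          (fun k hk => by simp only [Finset.mem_Icc] at hk; show N - (N - k) = k; omega)
          (fun i hi => by simp only [Finset.mem_range] at hi; show N - (N - i) = i; omega)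
          (fun k hk => rfl)
      have hBpos : μ Bset ≠ 0 := by
        intro h0
        set χ : Ω → ℂ := (A n).indicator (fun _ => 1) with hχ
        have hcm : AEStronglyMeasurable χ μ :=
          ((measurable_const.indicator (hAm n))).aestronglyMeasurable
        have h1 : eLpNorm (fun x => χ ((⇑α)^[N] x)) ⊤ μ = eLpNorm χ ⊤ μ := hcomp χ N
        have h2 : (fun x => χ ((⇑α)^[N] x)) =ᵐ[μ] 0 := by
          rw [Filter.EventuallyEq, ae_iff]
          refine measure_mono_null ?_ h0
          intro x hx
          simp only [Set.mem_setOf_eq, Pi.zero_apply] at hx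
          by_contra hxB
          apply hx
          rw [hχ, Set.indicator_of_notMem (show (⇑α)^[N] x ∉ A n from hxB)]
        rw [eLpNorm_congr_ae h2, eLpNorm_zero, eq_comm,
          eLpNorm_eq_zero_iff hcm (by simp), hχ, indicator_ae_eq_zero] at h1
        have hsupp : (Function.support fun _ : Ω => (1:ℂ)) = Set.univ :=
          Function.support_const one_ne_zero
        rw [hsupp, Set.inter_univ] at h1
        exact (hApos n).ne' h1
      have hjae : ∀ᵐ x ∂μ, ENNReal.ofReal (jf ((⇑α)^[N] x)) ≤ J := by
        have h2 : eLpNorm (fun x => ((jf ((⇑α)^[N] x)) : ℂ)) ⊤ μ = J := by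
          rw [hcomp (fun y => ((jf y) : ℂ)) N, hJ, eLpNorm_exponent_top, eLpNorm_exponent_top]
          unfold MeasureTheory.eLpNormEssSup
          congr 1
          funext x
          exact congrArg ((↑) : NNReal → ℝ≥0∞) (Complex.nnnorm_real (jf x))
        have h1 : essSup (fun x => (‖jf ((⇑α)^[N] x)‖₊ : ℝ≥0∞)) μ = J := by
          rw [← h2, eLpNorm_exponent_top]
          unfold MeasureTheory.eLpNormEssSup
          congr 1
          funext x
          exact (congrArg ((↑) : NNReal → ℝ≥0∞) (Complex.nnnorm_real _)).symm
        have h3 := ENNReal.ae_le_essSup (μ := μ) (fun x => (‖jf ((⇑α)^[N] x)‖₊ : ℝ≥0∞))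
        rw [h1] at h3
        filter_upwards [h3] with x hx
        rwa [← enorm_eq_nnnorm, Real.enorm_eq_ofReal (hjnn _)] at hx
      have hLnJ : J⁻¹ ≤ Ln := by
        apply le_essSup_of_meas
        intro hμ0
        apply hBpos
        have hBad0 : μ {x | ¬ ENNReal.ofReal (jf ((⇑α)^[N] x)) ≤ J} = 0 := by
          rw [← ae_iff]; exact hjae
        have hsub2 : Bset ⊆ {x | J⁻¹ ≤ Pe x} ∪ {x | ¬ ENNReal.ofReal (jf ((⇑α)^[N] x)) ≤ J} := by
          intro x hxB
          by_cases hb : ENNReal.ofReal (jf ((⇑α)^[N] x)) ≤ J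
          · left
            have hjx := hptws x hxB
            have hjpos : 0 < jf ((⇑α)^[N] x) := by
              rw [hjx]; exact inv_pos.2 (hPpos x)
            have hPx : P x = (jf ((⇑α)^[N] x))⁻¹ := by rw [hjx, inv_inv]
            simp only [Set.mem_setOf_eq, hPe]
            rw [hPx, ENNReal.ofReal_inv_of_pos hjpos]
            exact ENNReal.inv_le_inv.2 hb
          · right; exact hb
        have hle : μ Bset ≤ μ {x | J⁻¹ ≤ Pe x} + μ {x | ¬ ENNReal.ofReal (jf ((⇑α)^[N] x)) ≤ J} :=
          (measure_mono hsub2).trans (measure_union_le _ _)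
        rw [hμ0, hBad0, add_zero] at hle
        exact le_antisymm hle zero_le
      have hLtop : Ln ≠ ⊤ := by
        have hb : Ln ≤ ENNReal.ofReal (C ^ N) := by
          refine essSup_le_of_ae_le _ ?_
          filter_upwards with x
          apply ENNReal.ofReal_le_ofReal
          calc P x ≤ ∏ _k ∈ Finset.range N, C :=
                Finset.prod_le_prod (fun k _ => (hw0 _).le) (fun k _ => hwC _)
            _ = C ^ N := by rw [Finset.prod_const, Finset.card_range]
        exact (hb.trans_lt ENNReal.ofReal_lt_top).ne
      have hprodmeas : Measurable (fun x => (∏ k ∈ Finset.range N, ((w ((⇑α)^[k] x) : ℝ) : ℂ))) :=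
        Finset.measurable_prod _ (fun k _ => (Complex.measurable_ofReal).comp (hwm.comp (hαm k)))
      have hfaesm : AEStronglyMeasurable (⇑f) μ := Lp.aestronglyMeasurable f
      set v : Ω → ℂ := fun x => (M : ℂ) - ⇑f x with hv
      have hvaesm : AEStronglyMeasurable v μ := aestronglyMeasurable_const.sub hfaesm
      have hTf : AEStronglyMeasurable (TinfPow α w N ⇑f) μ :=
        hprodmeas.aestronglyMeasurable.mul (haesm _ hfaesm N)
      have hTv : AEStronglyMeasurable (TinfPow α w N v) μ :=
        hprodmeas.aestronglyMeasurable.mul (haesm _ hvaesm N)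
      have hsplit : (fun x => ((P x : ℝ) : ℂ) * (M:ℂ)) = TinfPow α w N ⇑f + TinfPow α w N v := by
        funext x
        simp only [TinfPow, Pi.add_apply, hv, hP]
        rw [Complex.ofReal_prod]
        ring
      have hLHS : eLpNorm (fun x => ((P x : ℝ) : ℂ) * (M:ℂ)) ⊤ μ = ENNReal.ofReal M * Ln := by
        rw [eLpNorm_exponent_top]
        unfold MeasureTheory.eLpNormEssSup
        rw [hLn, ← essSup_const_mul]
        congr 1
        funext x
        beta_reduce
        rw [enorm_mul, enorm_eq_nnnorm, enorm_eq_nnnorm, Complex.nnnorm_real, Complex.nnnorm_real,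
          ← enorm_eq_nnnorm, ← enorm_eq_nnnorm,
          Real.enorm_eq_ofReal (hPpos x).le, Real.enorm_eq_ofReal hM0.le]
        rw [mul_comm]
      have hvnorm : eLpNorm v ⊤ μ ≤ 1 := by
        have h1 : (⇑(hf₀mem.toLp _) - ⇑f) =ᵐ[μ] v := by
          filter_upwards [hf₀mem.coeFn_toLp] with x h3
          simp only [Pi.sub_apply, hv, h3]
        rw [← eLpNorm_congr_ae h1]
        have hd : dist (hf₀mem.toLp _) f < 1 := by rw [dist_comm]; exact Metric.mem_ball.1 hfball
        rw [Lp.dist_def] at hd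
        have hne : eLpNorm (⇑(hf₀mem.toLp _) - ⇑f) ⊤ μ ≠ ⊤ := by
          rw [← eLpNorm_congr_ae (Lp.coeFn_sub (hf₀mem.toLp _) f)]
          exact Lp.eLpNorm_ne_top _
        rw [← ENNReal.ofReal_toReal hne]
        calc ENNReal.ofReal (eLpNorm (⇑(hf₀mem.toLp _) - ⇑f) ⊤ μ).toReal
            ≤ ENNReal.ofReal 1 := ENNReal.ofReal_le_ofReal hd.le
          _ = 1 := ENNReal.ofReal_one
      have hTvb : eLpNorm (TinfPow α w N v) ⊤ μ ≤ Ln := by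
        have h1 : eLpNorm (fun x => v ((⇑α)^[N] x)) ⊤ μ ≤ 1 := (hcomp v N).le.trans hvnorm
        calc eLpNorm (TinfPow α w N v) ⊤ μ
            ≤ Ln * eLpNorm (fun x => v ((⇑α)^[N] x)) ⊤ μ := by
              rw [eLpNorm_exponent_top, eLpNorm_exponent_top]
              unfold MeasureTheory.eLpNormEssSup
              rw [hLn]
              refine le_trans (le_of_eq ?_) (essSup_mul_le (μ := μ) Pe
                (fun x => (‖v ((⇑α)^[N] x)‖₊ : ℝ≥0∞)))
              congr 1
              funext x
              simp only [Pi.mul_apply, TinfPow, hPe, hP]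
              rw [enorm_mul, ← Complex.ofReal_prod, enorm_eq_nnnorm (v ((⇑α)^[N] x)),
                enorm_eq_nnnorm (((∏ k ∈ Finset.range N, w ((⇑α)^[k] x) : ℝ) : ℂ)),
                Complex.nnnorm_real, ← enorm_eq_nnnorm (∏ k ∈ Finset.range N, w ((⇑α)^[k] x)),
                Real.enorm_eq_ofReal (Finset.prod_nonneg fun k _ => (hw0 _).le)]
          _ ≤ Ln * 1 := mul_le_mul_right h1 _
          _ = Ln := mul_one _
      have htri : ENNReal.ofReal M * Ln ≤ eLpNorm (TinfPow α w N ⇑f) ⊤ μ + Ln := by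
        calc ENNReal.ofReal M * Ln = eLpNorm (fun x => ((P x : ℝ):ℂ) * (M:ℂ)) ⊤ μ := hLHS.symm
          _ = eLpNorm (TinfPow α w N ⇑f + TinfPow α w N v) ⊤ μ := by rw [hsplit]
          _ ≤ eLpNorm (TinfPow α w N ⇑f) ⊤ μ + eLpNorm (TinfPow α w N v) ⊤ μ :=
              eLpNorm_add_le hTf hTv le_top
          _ ≤ eLpNorm (TinfPow α w N ⇑f) ⊤ μ + Ln := add_le_add_right hTvb _
      have hofM : ENNReal.ofReal M = J + 2 := by
        rw [hM, ENNReal.ofReal_add ENNReal.toReal_nonneg (by norm_num),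
          ENNReal.ofReal_toReal hJtop]
        norm_num
      have hdist : (J + 1) * Ln ≤ eLpNorm (TinfPow α w N ⇑f) ⊤ μ := by
        rw [← ENNReal.add_le_add_iff_right hLtop]
        calc (J+1) * Ln + Ln = (J + 2) * Ln := by ring
          _ = ENNReal.ofReal M * Ln := by rw [hofM]
          _ ≤ _ := htri
      calc (1:ℝ≥0∞) = J * J⁻¹ := (ENNReal.mul_inv_cancel hJ0 hJtop).symm
        _ ≤ (J + 1) * J⁻¹ := mul_le_mul_left le_self_add _
        _ ≤ (J + 1) * Ln := mul_le_mul_right hLnJ _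
        _ ≤ _ := hdist

    exact not_sigmaPorous_of_ball one_pos (fun f hf n => key f hf n)
  · have hsetuniv : {f : Lp ℂ ⊤ μ |
        ¬ Dense {g : Lp ℂ ⊤ μ | ∃ n, ⇑g =ᵐ[μ] TinfPow α w (γ n) ⇑f}} = Set.univ := by
      rw [Set.eq_univ_iff_forall]
      intro f
      simp only [Set.mem_setOf_eq]
      have hDc : {g : Lp ℂ ⊤ μ | ∃ n, ⇑g =ᵐ[μ] TinfPow α w (γ n) ⇑f}.Countable := by
        have hsub : {g : Lp ℂ ⊤ μ | ∃ n, ⇑g =ᵐ[μ] TinfPow α w (γ n) ⇑f} ⊆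
            ⋃ n : ℕ, {g : Lp ℂ ⊤ μ | ⇑g =ᵐ[μ] TinfPow α w (γ n) ⇑f} := by
          rintro g ⟨n, hn⟩; exact Set.mem_iUnion.2 ⟨n, hn⟩
        refine Set.Countable.mono hsub (Set.countable_iUnion fun n => Set.Subsingleton.countable ?_)
        intro g hg g' hg'
        simp only [Set.mem_setOf_eq] at hg hg'
        exact Lp.ext (hg.trans hg'.symm)
      have hmem : ∀ I : Set ℕ, MemLp ((⋃ m ∈ I, A m).indicator (fun _ => (1:ℂ))) ⊤ μ := by
        intro I
        refine memLp_top_of_bound ((measurable_const.indicator ?_)).aestronglyMeasurable 1 ?_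
        · exact MeasurableSet.biUnion (Set.to_countable I) (fun m _ => hAm m)
        · filter_upwards with x
          by_cases hx : x ∈ ⋃ m ∈ I, A m
          · rw [Set.indicator_of_mem hx]; simp
          · rw [Set.indicator_of_notMem hx]; simp
      set F : Set ℕ → Lp ℂ ⊤ μ := fun I => (hmem I).toLp _ with hF
      apply not_dense_of_countable hDc F
      intro I I' hII'
      have hkey : ∀ (I1 I2 : Set ℕ) (m : ℕ), m ∈ I1 → m ∉ I2 → 1 ≤ dist (F I1) (F I2) := by
        intro I1 I2 m h1 h2
        set u1 : Ω → ℂ := (⋃ k ∈ I1, A k).indicator (fun _ => (1:ℂ)) with hu1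
        set u2 : Ω → ℂ := (⋃ k ∈ I2, A k).indicator (fun _ => (1:ℂ)) with hu2
        have hae : (⇑(F I1) - ⇑(F I2)) =ᵐ[μ] fun x => u1 x - u2 x := by
          filter_upwards [(hmem I1).coeFn_toLp, (hmem I2).coeFn_toLp] with x e1 e2
          simp only [Pi.sub_apply, hF] at *
          rw [e1, e2]
        have hgood : ∀ x ∈ A m, u1 x - u2 x = 1 := by
          intro x hx
          have hx1 : x ∈ ⋃ k ∈ I1, A k := Set.mem_biUnion h1 hx
          have hx2 : x ∉ ⋃ k ∈ I2, A k := by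
            intro hxx
            obtain ⟨k, hk, hxk⟩ := Set.mem_iUnion₂.1 hxx
            have hkm : k ≠ m := fun h => h2 (h ▸ hk)
            exact (Set.disjoint_left.1 (hAdisj hkm) hxk) hx
          rw [hu1, hu2, Set.indicator_of_mem hx1, Set.indicator_of_notMem hx2, sub_zero]
        have hge : (1:ℝ≥0∞) ≤ eLpNorm (fun x => u1 x - u2 x) ⊤ μ := by
          rw [eLpNorm_exponent_top]
          unfold MeasureTheory.eLpNormEssSup
          apply le_essSup_of_meas
          intro h0
          apply (hApos m).ne'
          refine measure_mono_null (fun x hx => ?_) h0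
          simp only [Set.mem_setOf_eq]
          rw [hgood x hx]
          simp
        have hne : eLpNorm (fun x => u1 x - u2 x) ⊤ μ ≠ ⊤ := by
          have : MemLp (fun x => u1 x - u2 x) ⊤ μ := (hmem I1).sub (hmem I2)
          exact this.2.ne
        rw [Lp.dist_def, eLpNorm_congr_ae hae]
        have := ENNReal.toReal_mono hne hge
        simpa using this
      have hex : ∃ m, (m ∈ I ∧ m ∉ I') ∨ (m ∈ I' ∧ m ∉ I) := by
        by_contra hc
        push_neg at hc
        apply hII'
        ext m
        have := hc m
        tauto
      obtain ⟨m, hm⟩ := hex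
      rcases hm with ⟨h1, h2⟩ | ⟨h1, h2⟩
      · exact hkey I I' m h1 h2
      · rw [dist_comm]; exact hkey I' I m h1 h2

    rw [hsetuniv]
    exact not_sigmaPorous_of_ball (x := (0 : Lp ℂ ⊤ μ)) one_pos (fun f _ => Set.mem_univ f)
end

section
/- Let $G$ be a locally compact group with left Haar measure $\mu$, $a\in G$, and $w:G\to(0,\infty)$ a bounded measurable weight such that the sequence $\big(1/(w(a)w(a^2)\cdots w(a^n))\big)_n$ is bounded. Then the set of non-hypercyclic vectors of the weighted translation operator $T_{a,w,\infty}$ on $L^\infty(G,\mu)$ is not $\sigma$-porous. -/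
open MeasureTheory Metric Set ENNReal

/-- The `n`-th power of the weighted translation operator `T_{a,w} f = w · (f ∘ (a⁻¹ · ·))`,
computed pointwise: `(T^n f)(x) = (∏_{k=0}^{n-1} w(a^{-k} x)) f(a^{-n} x)`. -/
noncomputable def Tpow {G : Type*} [Group G] (a : G) (w : G → ℝ) (n : ℕ) (f : G → ℂ) :
    G → ℂ :=
  fun x => (∏ k ∈ Finset.range n, (w ((a ^ k)⁻¹ * x) : ℂ)) * f ((a ^ n)⁻¹ * x)

-- porous implies nowhere dense

lemma porous_isNowhereDense {X : Type*} [MetricSpace X] {lam : ℝ} (h0 : 0 < lam) (h1 : lam < 1)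
    {E : Set X} (hE : Porous lam E) : IsNowhereDense E := by
  rw [IsNowhereDense, eq_empty_iff_forall_notMem]
  intro x₀ hx₀
  obtain ⟨r, hr, hball⟩ := Metric.isOpen_iff.1 isOpen_interior x₀ hx₀
  have hball' : Metric.ball x₀ r ⊆ closure E := hball.trans interior_subset
  have hx₀E : x₀ ∈ closure E := hball' (Metric.mem_ball_self hr)
  obtain ⟨x, hxE, hxd⟩ := Metric.mem_closure_iff.1 hx₀E (r/2) (by linarith)
  have hxball : dist x x₀ < r/2 := by rwa [dist_comm] at hxd
  obtain ⟨y, hy, hyx, hyE⟩ := hE x hxE (r/4) (by linarith)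
  have hd : 0 < dist x y := dist_pos.2 (Ne.symm hyx)
  have hdy : dist y x < r/4 := Metric.mem_ball.1 hy
  have hρ : 0 < lam * dist x y := mul_pos h0 hd
  have hsub : Metric.ball y (lam * dist x y) ⊆ Metric.ball x₀ r := by
    intro z hz
    have h1' : dist z y < lam * dist x y := Metric.mem_ball.1 hz
    have h2 : dist x y < r/4 := by rwa [dist_comm] at hdy
    have : lam * dist x y < r/4 := by nlinarith
    calc dist z x₀ ≤ dist z y + dist y x + dist x x₀ := dist_triangle4 z y x x₀
      _ < r/4 + r/4 + r/2 := by linarith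
      _ = r := by ring
  have hyC : y ∈ closure E := (hsub.trans hball') (Metric.mem_ball_self hρ)
  obtain ⟨z, hzE, hzd⟩ := Metric.mem_closure_iff.1 hyC _ hρ
  have : z ∈ Metric.ball y (lam * dist x y) ∩ E := ⟨Metric.mem_ball.2 (by rwa [dist_comm] at hzd), hzE⟩
  rw [hyE] at this
  exact this

lemma sigmaPorous_isMeagre {X : Type*} [MetricSpace X] {E : Set X} (h : SigmaPorous E) :
    IsMeagre E := by
  obtain ⟨S, hS, rfl⟩ := h
  refine isMeagre_iUnion fun n => ?_
  obtain ⟨lam, h0, h1, hp⟩ := hS n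
  have hnd := porous_isNowhereDense h0 h1 hp
  rw [isMeagre_iff_countable_union_isNowhereDense]
  exact ⟨{S n}, by simpa using hnd, countable_singleton _, by simp⟩

lemma not_sigmaPorous_univ {X : Type*} [MetricSpace X] [CompleteSpace X] [Nonempty X] :
    ¬ SigmaPorous (univ : Set X) := by
  intro h
  have hm : IsMeagre (univ : Set X) := sigmaPorous_isMeagre h
  rw [IsMeagre, compl_univ] at hm
  exact Set.not_nonempty_empty ((dense_of_mem_residual hm).nonempty)

lemma ae_norm_sub_le_dist {α : Type*} [MeasurableSpace α] (ν : Measure α) (f g : Lp ℂ ⊤ ν) :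
    ∀ᵐ x ∂ν, ‖f x - g x‖ ≤ dist f g := by
  have h₁ : ∀ᵐ x ∂ν, (‖(f - g : Lp ℂ ⊤ ν) x‖₊ : ℝ≥0∞) ≤ eLpNormEssSup (⇑(f - g)) ν :=
    ae_le_eLpNormEssSup
  have h₂ := Lp.coeFn_sub f g
  have hne : eLpNormEssSup (⇑(f - g)) ν ≠ ∞ := by
    have := Lp.eLpNorm_ne_top (f - g)
    rwa [eLpNorm_exponent_top] at this
  filter_upwards [h₁, h₂] with x hx hx2
  have hdist : dist f g = (eLpNormEssSup (⇑(f - g)) ν).toReal := by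
    rw [dist_eq_norm, Lp.norm_def, eLpNorm_exponent_top]
  have h3 : ‖(f - g : Lp ℂ ⊤ ν) x‖ ≤ (eLpNormEssSup (⇑(f - g)) ν).toReal := by
    have := ENNReal.toReal_mono hne hx
    simpa using this
  calc ‖f x - g x‖ = ‖(f - g : Lp ℂ ⊤ ν) x‖ := by rw [hx2]; simp
    _ ≤ _ := h3.trans hdist.ge

lemma ae_at_point {α : Type*} [MeasurableSpace α] {ν : Measure α} {p : α → Prop} {x₀ : α}
    (hae : ∀ᵐ x ∂ν, p x) (hx : ν {x₀} ≠ 0) : p x₀ := by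
  by_contra hc
  exact hx (measure_mono_null (by simpa [Set.singleton_subset_iff] using hc) (ae_iff.1 hae))

lemma prod_shift {M : Type*} [CommMonoid M] (g : ℕ → M) (n : ℕ) :
    ∏ j ∈ Finset.range n, g (j + 1) = ∏ j ∈ Finset.Icc 1 n, g j := by
  induction n with
  | zero => simp
  | succ n ih =>
    rw [Finset.prod_range_succ, ih, Finset.prod_Icc_succ_top (Nat.one_le_iff_ne_zero.2 n.succ_ne_zero)]

lemma Tpow_at_pow {G : Type*} [Group G] (a : G) (w : G → ℝ) (f : G → ℂ) (n : ℕ) :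
    Tpow a w n f (a ^ n) = ((∏ k ∈ Finset.Icc 1 n, w (a ^ k) : ℝ) : ℂ) * f 1 := by
  unfold Tpow
  rw [inv_mul_cancel]
  congr 1
  rw [← Complex.ofReal_prod, Complex.ofReal_inj]
  have h2 : ∀ k ∈ Finset.range n, w ((a ^ k)⁻¹ * a ^ n) = (fun j => w (a ^ (j + 1))) (n - 1 - k) := by
    intro k hk
    have hkn : k < n := Finset.mem_range.1 hk
    have h3 : (a ^ k)⁻¹ * a ^ n = a ^ (n - k) := by
      rw [inv_mul_eq_iff_eq_mul, ← pow_add, Nat.add_sub_cancel' hkn.le]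
    have h4 : n - 1 - k + 1 = n - k := by omega
    simp only [h3, h4]
  rw [Finset.prod_congr rfl h2, Finset.prod_range_reflect (fun j => w (a ^ (j + 1))) n]
  exact prod_shift (fun j => w (a ^ j)) n

lemma insep_of_mem_closure_one {G : Type*} [Group G] [TopologicalSpace G] [IsTopologicalGroup G]
    {y : G} (hy : y ∈ closure ({1} : Set G)) : Inseparable (1 : G) y := by
  rw [inseparable_iff_forall_isOpen]
  intro U hU
  constructor
  · intro h1U
    set h : G ≃ₜ G := (Homeomorph.inv G).trans (Homeomorph.mulLeft y) with hh
    have hV : IsOpen (h '' U) := h.isOpen_image.2 hU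
    have hyV : y ∈ h '' U := ⟨1, h1U, by simp [hh]⟩
    obtain ⟨z, hzV, hz1⟩ := mem_closure_iff.1 hy (h '' U) hV hyV
    obtain ⟨u, huU, huz⟩ := hzV
    rw [Set.mem_singleton_iff] at hz1
    subst hz1
    have : y * u⁻¹ = 1 := by simpa [hh] using huz
    rwa [mul_inv_eq_one.1 this]
  · intro hyU
    obtain ⟨z, hzU, hz1⟩ := mem_closure_iff.1 hy U hU hyU
    rw [Set.mem_singleton_iff] at hz1
    rwa [hz1] at hzU

lemma mem_measurableSet_of_insep {G : Type*} [TopologicalSpace G] [MeasurableSpace G]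
    [BorelSpace G] {s : Set G} (hs : MeasurableSet s) {x y : G} (hxy : Inseparable x y)
    (hx : x ∈ s) : y ∈ s := by
  have hs' : MeasurableSet[MeasurableSpace.generateFrom {t : Set G | IsOpen t}] s := by
    have := BorelSpace.measurable_eq (α := G)
    rw [this] at hs
    exact hs
  have key : ∀ x y : G, Inseparable x y → (x ∈ s ↔ y ∈ s) := by
    refine MeasurableSpace.generateFrom_induction _
      (fun t _ => ∀ x y : G, Inseparable x y → (x ∈ t ↔ y ∈ t)) ?_ ?_ ?_ ?_ s hs'
    · intro t ht _ x y hxy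
      exact (inseparable_iff_forall_isOpen.1 hxy) t ht
    · simp
    · intro t _ h x y hxy
      simpa using not_congr (h x y hxy)
    · intro t _ h x y hxy
      simp only [Set.mem_iUnion]
      exact exists_congr fun n => h n x y hxy
  exact (key x y hxy).1 hx

lemma exists_disjoint_seq {G : Type*} [TopologicalSpace G] (U0 : Set G) (hU0 : IsOpen U0)
    (hne : U0.Nonempty)
    (split : ∀ O : Set G, IsOpen O → O.Nonempty → ∃ p : Set G × Set G,
      IsOpen p.1 ∧ IsOpen p.2 ∧ p.1.Nonempty ∧ p.2.Nonempty ∧ p.1 ⊆ O ∧ p.2 ⊆ O ∧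
        Disjoint p.1 p.2) :
    ∃ e : ℕ → Set G, (∀ n, IsOpen (e n)) ∧ (∀ n, (e n).Nonempty) ∧ (∀ n, e n ⊆ U0) ∧
      ∀ m n, m ≠ n → Disjoint (e m) (e n) := by
  classical
  have step : ∀ s : {s : Set G // IsOpen s ∧ s.Nonempty},
      {p : Set G × Set G // IsOpen p.1 ∧ IsOpen p.2 ∧ p.1.Nonempty ∧ p.2.Nonempty ∧
        p.1 ⊆ s.1 ∧ p.2 ⊆ s.1 ∧ Disjoint p.1 p.2} :=
    fun s => ⟨Classical.choose (split s.1 s.2.1 s.2.2), Classical.choose_spec (split s.1 s.2.1 s.2.2)⟩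
  let u : ℕ → {s : Set G // IsOpen s ∧ s.Nonempty} := fun n =>
    Nat.rec ⟨U0, hU0, hne⟩ (fun _ s => ⟨(step s).1.1, (step s).2.1, (step s).2.2.2.1⟩) n
  let e : ℕ → Set G := fun n => (step (u n)).1.2
  have hu_succ : ∀ n, (u (n + 1)).1 = (step (u n)).1.1 := fun n => rfl
  have hu_sub : ∀ n, (u (n + 1)).1 ⊆ (u n).1 := by
    intro n
    rw [hu_succ]
    exact (step (u n)).2.2.2.2.2.1
  have hu_mono : ∀ m n, m ≤ n → (u n).1 ⊆ (u m).1 := by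
    intro m n hmn
    induction n with
    | zero => rw [Nat.le_zero.1 hmn]
    | succ n ih =>
      rcases Nat.lt_or_ge m (n + 1) with h | h
      · exact (hu_sub n).trans (ih (Nat.lt_succ_iff.1 h))
      · rw [Nat.le_antisymm hmn h]
  have he_sub_u : ∀ n, e n ⊆ (u n).1 := fun n => (step (u n)).2.2.2.2.2.2.1
  have he_disj_next : ∀ n, Disjoint (u (n + 1)).1 (e n) := by
    intro n
    rw [hu_succ]
    exact (step (u n)).2.2.2.2.2.2.2
  have hlt : ∀ m n, m < n → Disjoint (e m) (e n) := by
    intro m n hmn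
    exact ((he_disj_next m).mono_left ((he_sub_u n).trans (hu_mono (m + 1) n hmn))).symm
  refine ⟨e, fun n => (step (u n)).2.2.1, fun n => (step (u n)).2.2.2.2.1,
    fun n => (he_sub_u n).trans (hu_mono 0 n (Nat.zero_le n)), ?_⟩
  intro m n hmn
  rcases Nat.lt_or_ge m n with h | h
  · exact hlt m n h
  · exact (hlt n m (lt_of_le_of_ne h (Ne.symm hmn))).symm

lemma orbit_not_dense {G : Type*} [Group G] [TopologicalSpace G] [IsTopologicalGroup G]
    [LocallyCompactSpace G] [MeasurableSpace G] [BorelSpace G]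
    (μ : Measure G) [μ.IsHaarMeasure]
    (a : G) (w : G → ℝ) (hw0 : ∀ x, 0 < w x)
    (hb : ∃ C : ℝ, ∀ n : ℕ, (∏ k ∈ Finset.Icc 1 n, w (a ^ k))⁻¹ ≤ C)
    (f : Lp ℂ ⊤ μ) :
    ¬ Dense {g : Lp ℂ ⊤ μ | ∃ n : ℕ, ⇑g =ᵐ[μ] Tpow a w n ⇑f} := by
  intro hd
  set O : Set (Lp ℂ ⊤ μ) := {g : Lp ℂ ⊤ μ | ∃ n : ℕ, ⇑g =ᵐ[μ] Tpow a w n ⇑f} with hO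
  by_cases hA : ∀ n : ℕ, μ {a ^ n} ≠ 0
  · -- Case A : all powers of `a` are non-null points; evaluate at `a ^ n`.
    obtain ⟨C, hC⟩ := hb
    have hCpos : 0 < C := lt_of_lt_of_le one_pos (by simpa using hC 0)
    have hprodpos : ∀ n : ℕ, 0 < ∏ k ∈ Finset.Icc 1 n, w (a ^ k) :=
      fun n => Finset.prod_pos fun i _ => hw0 _
    have hlow : ∀ n : ℕ, C⁻¹ ≤ ∏ k ∈ Finset.Icc 1 n, w (a ^ k) := by
      intro n
      have h1 := hC n
      have h2 : (0:ℝ) < (∏ k ∈ Finset.Icc 1 n, w (a ^ k))⁻¹ := inv_pos.2 (hprodpos n)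
      calc C⁻¹ ≤ ((∏ k ∈ Finset.Icc 1 n, w (a ^ k))⁻¹)⁻¹ := by
            exact inv_anti₀ h2 h1
        _ = _ := inv_inv _
    -- step 1 : f 1 = 0
    have hsmall : ∀ ε : ℝ, 0 < ε → ‖(⇑f) 1‖ < C * ε := by
      intro ε hε
      obtain ⟨g, hgball, hgO⟩ := (Metric.dense_iff.1 hd) 0 ε hε
      obtain ⟨n, hgn⟩ := hgO
      have hdist : dist g (0 : Lp ℂ ⊤ μ) < ε := by
        have := Metric.mem_ball.1 hgball
        rwa [dist_comm] at this
      have hae : ∀ᵐ x ∂μ, ‖Tpow a w n (⇑f) x‖ < ε := by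
        filter_upwards [ae_norm_sub_le_dist μ g 0, hgn, Lp.coeFn_zero (E := ℂ) (p := ⊤) (μ := μ)]
          with x h1 h2 h3
        rw [h2, h3] at h1
        simpa using lt_of_le_of_lt h1 hdist
      have hpt := ae_at_point hae (hA n)
      rw [Tpow_at_pow] at hpt
      have hnorm : (∏ k ∈ Finset.Icc 1 n, w (a ^ k)) * ‖(⇑f) 1‖ < ε := by
        rw [norm_mul, Complex.norm_real, Real.norm_eq_abs, abs_of_pos (hprodpos n)] at hpt
        exact hpt
      have h5 : C⁻¹ * ‖(⇑f) 1‖ ≤ (∏ k ∈ Finset.Icc 1 n, w (a ^ k)) * ‖(⇑f) 1‖ :=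
        mul_le_mul_of_nonneg_right (hlow n) (norm_nonneg _)
      have h6 : C⁻¹ * ‖(⇑f) 1‖ < ε := lt_of_le_of_lt h5 hnorm
      calc ‖(⇑f) 1‖ = C * (C⁻¹ * ‖(⇑f) 1‖) := by field_simp
        _ < C * ε := by exact mul_lt_mul_of_pos_left h6 hCpos
    have hf1 : (⇑f) 1 = 0 := by
      by_contra hne
      have hpos : 0 < ‖(⇑f) 1‖ := norm_pos_iff.2 hne
      have := hsmall (‖(⇑f) 1‖ / (2 * C)) (by positivity)
      rw [mul_div_assoc'] at this
      have h7 : C * ‖(⇑f) 1‖ / (2 * C) = ‖(⇑f) 1‖ / 2 := by field_simp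
      rw [h7] at this
      linarith
    -- step 2 : contradiction with target constant 1
    have hone : MemLp (fun _ : G => (1 : ℂ)) ⊤ μ := memLp_top_const 1
    obtain ⟨g, hgball, hgO⟩ := (Metric.dense_iff.1 hd) (hone.toLp _) (1/2) (by norm_num)
    obtain ⟨n, hgn⟩ := hgO
    have hdist : dist g (hone.toLp _) < 1/2 := by
      have := Metric.mem_ball.1 hgball
      rwa [dist_comm] at this
    have hae : ∀ᵐ x ∂μ, ‖Tpow a w n (⇑f) x - 1‖ < 1/2 := by
      filter_upwards [ae_norm_sub_le_dist μ g (hone.toLp _), hgn, hone.coeFn_toLp]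
        with x h1 h2 h3
      rw [h2, h3] at h1
      exact lt_of_le_of_lt h1 hdist
    have hpt := ae_at_point hae (hA n)
    rw [Tpow_at_pow, hf1, mul_zero, zero_sub, norm_neg, norm_one] at hpt
    norm_num at hpt
  · -- Case B : some power of `a` is a null point; `L^∞` is non-separable.
    push_neg at hA
    obtain ⟨n₀, h0⟩ := hA
    -- the closure of {1} is null
    have hN : μ (closure ({1} : Set G)) = 0 := by
      obtain ⟨s, hsub, hsm, hs0⟩ := exists_measurable_superset_of_null h0
      have hsubN : closure ({1} : Set G) ⊆ (fun z => a ^ n₀ * z) ⁻¹' s := by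
        intro y hy
        have hins : Inseparable (a ^ n₀ * 1) (a ^ n₀ * y) :=
          (insep_of_mem_closure_one hy).map (continuous_const.mul continuous_id)
        rw [mul_one] at hins
        exact mem_measurableSet_of_insep hsm hins (hsub rfl)
      have hle : μ (closure ({1} : Set G)) ≤ 0 :=
        calc μ (closure ({1} : Set G)) ≤ μ ((fun z => a ^ n₀ * z) ⁻¹' s) := measure_mono hsubN
          _ = μ s := measure_preimage_mul μ _ s
          _ = 0 := hs0
      exact le_zero_iff.1 hle
    have hclos : ∀ x : G, μ (closure ({x} : Set G)) = 0 := by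
      intro x
      have h1 : closure ({x} : Set G) = (fun z => x⁻¹ * z) ⁻¹' closure ({1} : Set G) := by
        have h2 : (Homeomorph.mulLeft x) '' closure ({1} : Set G) = closure ({x} : Set G) := by
          rw [Homeomorph.image_closure]
          congr 1
          simp
        rw [← h2]
        ext z
        simp [Homeomorph.mulLeft, eq_inv_mul_iff_mul_eq]
      rw [h1, measure_preimage_mul]
      exact hN
    -- splitting lemma
    have hsplit : ∀ V : Set G, IsOpen V → V.Nonempty → ∃ p : Set G × Set G,
        IsOpen p.1 ∧ IsOpen p.2 ∧ p.1.Nonempty ∧ p.2.Nonempty ∧ p.1 ⊆ V ∧ p.2 ⊆ V ∧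
          Disjoint p.1 p.2 := by
      intro V hOop hOne
      have hpos : 0 < μ V := hOop.measure_pos μ hOne
      have hex : ∃ x ∈ V, ∃ y ∈ V, ¬ Inseparable x y := by
        by_contra hcon
        push_neg at hcon
        obtain ⟨x₀, hx₀⟩ := hOne
        have hsubc : V ⊆ closure ({x₀} : Set G) := by
          intro y hyO
          have hin : Inseparable x₀ y := hcon x₀ hx₀ y hyO
          rw [← specializes_iff_mem_closure]
          exact hin.specializes
        have := measure_mono (μ := μ) hsubc
        rw [hclos x₀] at this
        exact hpos.not_ge this
      obtain ⟨x, hx, y, hy, hxy⟩ := hex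
      have hdisj : Disjoint (nhds x) (nhds y) := disjoint_nhds_nhds_iff_not_inseparable.2 hxy
      rw [Filter.disjoint_iff] at hdisj
      obtain ⟨s, hs, t, ht, hst⟩ := hdisj
      refine ⟨(V ∩ interior s, V ∩ interior t), hOop.inter isOpen_interior,
        hOop.inter isOpen_interior, ⟨x, hx, mem_interior_iff_mem_nhds.2 hs⟩,
        ⟨y, hy, mem_interior_iff_mem_nhds.2 ht⟩, inter_subset_left, inter_subset_left, ?_⟩
      exact ((hst.mono interior_subset interior_subset).mono inter_subset_right inter_subset_right)
    -- a compact neighborhood and the disjoint sequence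
    obtain ⟨K, hKco, hKn⟩ := exists_compact_mem_nhds (1 : G)
    obtain ⟨e, heo, hene, hesub, hedisj⟩ := exists_disjoint_seq (interior K) isOpen_interior
      ⟨1, mem_interior_iff_mem_nhds.2 hKn⟩ hsplit
    -- indicator functions
    have hmeasS : ∀ A : Set ℕ, MeasurableSet (⋃ n ∈ A, e n) :=
      fun A => (isOpen_biUnion fun n _ => heo n).measurableSet
    have hfinS : ∀ A : Set ℕ, μ (⋃ n ∈ A, e n) ≠ ∞ := by
      intro A
      have h1 : (⋃ n ∈ A, e n) ⊆ K := by
        refine iUnion₂_subset fun n _ => (hesub n).trans interior_subset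
      exact ((measure_mono h1).trans_lt hKco.measure_lt_top).ne
    let F : Set ℕ → Lp ℂ ⊤ μ := fun A => indicatorConstLp ⊤ (hmeasS A) (hfinS A) (1 : ℂ)
    have hFdist : ∀ A B : Set ℕ, A ≠ B → 1 ≤ dist (F A) (F B) := by
      intro A B hAB
      by_contra hlt
      push_neg at hlt
      -- some n in the symmetric difference
      have hex : ∃ n, (n ∈ A ∧ n ∉ B) ∨ (n ∈ B ∧ n ∉ A) := by
        by_contra hcon
        push_neg at hcon
        apply hAB
        ext n
        have := hcon n
        tauto
      obtain ⟨n, hn⟩ := hex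
      -- wlog structure : handle both cases symmetrically
      have key : ∀ A' B' : Set ℕ, n ∈ A' → n ∉ B' → dist (F A') (F B') < 1 → False := by
        intro A' B' hnA hnB hd1
        have hae : ∀ᵐ x ∂μ,
            ‖(⋃ m ∈ A', e m).indicator (fun _ => (1:ℂ)) x -
              (⋃ m ∈ B', e m).indicator (fun _ => (1:ℂ)) x‖ < 1 := by
          filter_upwards [ae_norm_sub_le_dist μ (F A') (F B'),
            indicatorConstLp_coeFn (p := ⊤) (hs := hmeasS A') (hμs := hfinS A') (c := (1:ℂ)),
            indicatorConstLp_coeFn (p := ⊤) (hs := hmeasS B') (hμs := hfinS B') (c := (1:ℂ))]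
            with x h1 h2 h3
          rw [h2, h3] at h1
          exact lt_of_le_of_lt h1 hd1
        have hbad : e n ⊆ {x | ¬ ‖(⋃ m ∈ A', e m).indicator (fun _ => (1:ℂ)) x -
            (⋃ m ∈ B', e m).indicator (fun _ => (1:ℂ)) x‖ < 1} := by
          intro x hxe
          have hxA : x ∈ ⋃ m ∈ A', e m := mem_biUnion hnA hxe
          have hxB : x ∉ ⋃ m ∈ B', e m := by
            intro hxB
            obtain ⟨m, hmB, hxm⟩ := mem_iUnion₂.1 hxB
            have hmn : m ≠ n := fun h => hnB (h ▸ hmB)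
            exact (hedisj m n hmn).ne_of_mem hxm hxe rfl
          simp only [Set.mem_setOf_eq, Set.indicator_of_mem hxA, Set.indicator_of_notMem hxB]
          norm_num
        have h2 := measure_mono_null hbad (ae_iff.1 hae)
        exact ((heo n).measure_pos μ (hene n)).ne' h2
      rcases hn with ⟨h1, h2⟩ | ⟨h1, h2⟩
      · exact key A B h1 h2 hlt
      · exact key B A h1 h2 (by rwa [dist_comm])
    -- the orbit is countable
    have hOc : O.Countable := by
      have : O = ⋃ n : ℕ, {g : Lp ℂ ⊤ μ | ⇑g =ᵐ[μ] Tpow a w n ⇑f} := by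
        ext g; simp [hO, Set.mem_iUnion]
      rw [this]
      refine Set.countable_iUnion fun n => Set.Subsingleton.countable ?_
      intro g hg g' hg'
      simp only [Set.mem_setOf_eq] at hg hg'
      exact Lp.ext (hg.trans hg'.symm)
    -- choose close orbit points
    have hch : ∀ A : Set ℕ, ∃ g, g ∈ O ∧ dist (F A) g < 1/2 := by
      intro A
      obtain ⟨g, hgball, hgO⟩ := (Metric.dense_iff.1 hd) (F A) (1/2) (by norm_num)
      exact ⟨g, hgO, by have := Metric.mem_ball.1 hgball; rwa [dist_comm] at this⟩
    choose φ hφO hφd using hch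
    have hinj : Function.Injective φ := by
      intro A B hAB2
      by_contra hne
      have h1 : dist (F A) (F B) ≤ dist (F A) (φ A) + dist (φ B) (F B) := by
        rw [hAB2]
        exact dist_triangle _ _ _
      have h2 : dist (φ B) (F B) < 1/2 := by rw [dist_comm]; exact hφd B
      have h3 : dist (F A) (F B) < 1 := by linarith [hφd A]
      exact absurd h3 (not_lt.2 (hFdist A B hne))
    -- cardinality contradiction
    obtain ⟨ι, hι⟩ := Set.countable_iff_exists_injective.1 hOc
    have : Function.Injective (fun A : Set ℕ => ι ⟨φ A, hφO A⟩) := by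
      intro A B h
      exact hinj (Subtype.ext_iff.1 (hι h))
    exact Function.cantor_injective _ this

/-- For a locally compact group with left Haar measure and a bounded measurable weight `w`
with `(1/(w(a) w(a²) ⋯ w(aⁿ)))_n` bounded, the set of non-hypercyclic vectors of
`T_{a,w,∞}` on `L^∞(G,μ)` is not `σ`-porous. -/
theorem stmt_15 {G : Type*} [Group G] [TopologicalSpace G] [IsTopologicalGroup G]
    [LocallyCompactSpace G] [MeasurableSpace G] [BorelSpace G]
    (μ : Measure G) [μ.IsHaarMeasure]
    (a : G) (w : G → ℝ) (hw0 : ∀ x, 0 < w x) (hwm : Measurable w)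
    (hwb : ∃ C, ∀ x, w x ≤ C)
    (hb : ∃ C : ℝ, ∀ n : ℕ, (∏ k ∈ Finset.Icc 1 n, w (a ^ k))⁻¹ ≤ C) :
    ¬ SigmaPorous {f : Lp ℂ ⊤ μ |
      ¬ Dense {g : Lp ℂ ⊤ μ | ∃ n : ℕ, ⇑g =ᵐ[μ] Tpow a w n ⇑f}} := by
  intro hσ
  have huniv : {f : Lp ℂ ⊤ μ |
      ¬ Dense {g : Lp ℂ ⊤ μ | ∃ n : ℕ, ⇑g =ᵐ[μ] Tpow a w n ⇑f}} = univ :=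
    eq_univ_of_forall fun f => orbit_not_dense μ a w hw0 hb f
  rw [huniv] at hσ
  haveI : Fact (1 ≤ (⊤ : ℝ≥0∞)) := ⟨le_top⟩
  exact not_sigmaPorous_univ hσ
end
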